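/- arXiv:1908.00856 — 8 statements merged into one kernel-verified Lean document; each statement's English description precedes it below -/
import Mathlib

section
/- For a > b > c, the curve t ↦ √(a-c)·(sn(s,k)·ns(t,k), cn(s,k)·ds(t,k)) with k² = (a-b)/(a-c) and fixed s, restricted to the lines s + t = const (resp. s − t = const) in the (s,t)-plane, is a straight line in R²; that is, the second derivative of the map (s,t) ↦ √(a-c)·(sn(s)ns(t), cn(s)ds(t)) along any direction (1,±1) is proportional to the first derivative along that direction. -/
private theorem straight_aux (x1 y1 x2 y2 : ℝ) (hcross : x2 * y1 = y2 * x1)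
    (hne : x1 ^ 2 + y1 ^ 2 ≠ 0) :
    ∃ μ : ℝ, ((x2, y2) : ℝ × ℝ) = μ • ((x1, y1) : ℝ × ℝ) := by
  refine ⟨(x2 * x1 + y2 * y1) / (x1 ^ 2 + y1 ^ 2), ?_⟩
  have h1 : x2 = (x2 * x1 + y2 * y1) / (x1 ^ 2 + y1 ^ 2) * x1 := by
    rw [div_mul_eq_mul_div, eq_comm, div_eq_iff hne]; linear_combination (-y1) * hcross
  have h2 : y2 = (x2 * x1 + y2 * y1) / (x1 ^ 2 + y1 ^ 2) * y1 := by
    rw [div_mul_eq_mul_div, eq_comm, div_eq_iff hne]; linear_combination x1 * hcross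
  rw [Prod.smul_mk, smul_eq_mul, smul_eq_mul, ← h1, ← h2]

set_option maxHeartbeats 2000000 in
/-- The diagonal curves s ± t = const of the confocal-conic parametrisation
(s,t) ↦ √(a-c)·(sn s · ns t, cn s · ds t) are straight lines: the second
derivative along any direction (1, ±1) is proportional to the first derivative. -/
theorem diagonal_curves_are_straight_lines
    (a b c k : ℝ) (hab : b < a) (hbc : c < b)
    (hk : k ^ 2 = (a - b) / (a - c))
    (sn cn dn : ℝ → ℝ)
    (hsn : ∀ s, HasDerivAt sn (cn s * dn s) s)
    (hcn : ∀ s, HasDerivAt cn (-(sn s * dn s)) s)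
    (hdn : ∀ s, HasDerivAt dn (-(k ^ 2 * sn s * cn s)) s)
    (hpyth : ∀ s, sn s ^ 2 + cn s ^ 2 = 1)
    (hdn2 : ∀ s, dn s ^ 2 + k ^ 2 * sn s ^ 2 = 1)
    (s0 t0 : ℝ) (ht0 : sn t0 ≠ 0)
    (ε : ℝ) (hε : ε = 1 ∨ ε = -1) :
    ∃ μ : ℝ,
      deriv (deriv (fun τ : ℝ =>
        ((Real.sqrt (a - c) * (sn (s0 + τ) * (1 / sn (t0 + ε * τ))),
          Real.sqrt (a - c) * (cn (s0 + τ) * (dn (t0 + ε * τ) / sn (t0 + ε * τ))))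
          : ℝ × ℝ))) 0
      = μ • deriv (fun τ : ℝ =>
        ((Real.sqrt (a - c) * (sn (s0 + τ) * (1 / sn (t0 + ε * τ))),
          Real.sqrt (a - c) * (cn (s0 + τ) * (dn (t0 + ε * τ) / sn (t0 + ε * τ))))
          : ℝ × ℝ)) 0 := by
  have he : ε ^ 2 = 1 := by rcases hε with h | h <;> rw [h] <;> norm_num
  set K := Real.sqrt (a - c) with hKdef
  -- derivative lemmas for the shifted functions
  have hlin : ∀ τ : ℝ, HasDerivAt (fun τ : ℝ => t0 + ε * τ) ε τ := fun τ => by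
    simpa using ((hasDerivAt_id τ).const_mul ε).const_add t0
  have hS : ∀ τ, HasDerivAt (fun τ => sn (s0 + τ)) (cn (s0 + τ) * dn (s0 + τ)) τ := fun τ => by
    simpa [Function.comp_def] using (hsn (s0 + τ)).comp τ ((hasDerivAt_id τ).const_add s0)
  have hC : ∀ τ, HasDerivAt (fun τ => cn (s0 + τ)) (-(sn (s0 + τ) * dn (s0 + τ))) τ := fun τ => by
    simpa [Function.comp_def] using (hcn (s0 + τ)).comp τ ((hasDerivAt_id τ).const_add s0)
  have hD : ∀ τ, HasDerivAt (fun τ => dn (s0 + τ)) (-(k ^ 2 * sn (s0 + τ) * cn (s0 + τ))) τ := fun τ => by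
    simpa [Function.comp_def] using (hdn (s0 + τ)).comp τ ((hasDerivAt_id τ).const_add s0)
  have hs : ∀ τ, HasDerivAt (fun τ => sn (t0 + ε * τ)) (cn (t0 + ε * τ) * dn (t0 + ε * τ) * ε) τ := fun τ => by
    simpa [Function.comp_def] using (hsn (t0 + ε * τ)).comp τ (hlin τ)
  have hc : ∀ τ, HasDerivAt (fun τ => cn (t0 + ε * τ)) (-(sn (t0 + ε * τ) * dn (t0 + ε * τ)) * ε) τ := fun τ => by
    simpa [Function.comp_def] using (hcn (t0 + ε * τ)).comp τ (hlin τ)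
  have hd : ∀ τ, HasDerivAt (fun τ => dn (t0 + ε * τ)) (-(k ^ 2 * sn (t0 + ε * τ) * cn (t0 + ε * τ)) * ε) τ := fun τ => by
    simpa [Function.comp_def] using (hdn (t0 + ε * τ)).comp τ (hlin τ)
  set X1 : ℝ → ℝ := fun τ => K * ((cn (s0 + τ) * dn (s0 + τ) * sn (t0 + ε * τ)
      - ε * (sn (s0 + τ) * cn (t0 + ε * τ) * dn (t0 + ε * τ))) / sn (t0 + ε * τ) ^ 2) with hX1def
  set Y1 : ℝ → ℝ := fun τ => K * (-(sn (s0 + τ) * dn (s0 + τ) * dn (t0 + ε * τ) * sn (t0 + ε * τ)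
      + ε * (cn (s0 + τ) * cn (t0 + ε * τ))) / sn (t0 + ε * τ) ^ 2) with hY1def
  have lemA : ∀ τ, sn (t0 + ε * τ) ≠ 0 →
      HasDerivAt (fun τ : ℝ =>
        ((K * (sn (s0 + τ) * (1 / sn (t0 + ε * τ))),
          K * (cn (s0 + τ) * (dn (t0 + ε * τ) / sn (t0 + ε * τ)))) : ℝ × ℝ)) (X1 τ, Y1 τ) τ := by
    intro τ hne
    have h1 : HasDerivAt (fun τ => K * (sn (s0 + τ) * (1 / sn (t0 + ε * τ)))) (X1 τ) τ := by
      have h := ((hS τ).mul ((hasDerivAt_const τ (1:ℝ)).div (hs τ) hne)).const_mul K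
      refine h.congr_deriv ?_
      symm
      rw [hX1def]
      simp only [Pi.div_apply, Pi.mul_apply]
      field_simp
      ring
    have h2 : HasDerivAt (fun τ => K * (cn (s0 + τ) * (dn (t0 + ε * τ) / sn (t0 + ε * τ)))) (Y1 τ) τ := by
      have h := ((hC τ).mul ((hd τ).div (hs τ) hne)).const_mul K
      refine h.congr_deriv ?_
      symm
      rw [hY1def]
      simp only [Pi.div_apply, Pi.mul_apply]
      field_simp
      rw [show τ * ε = ε * τ from mul_comm τ ε]
      linear_combination (ε * cn (s0 + τ) * cn (t0 + ε * τ) * K / sn (t0 + ε * τ) ^ 2) * hdn2 (t0 + ε * τ)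
    exact h1.prodMk h2
  have hne0 : sn (t0 + ε * 0) ≠ 0 := by simpa using ht0
  have hev : ∀ᶠ τ in nhds (0:ℝ), sn (t0 + ε * τ) ≠ 0 := (hs 0).continuousAt.eventually_ne hne0
  have hderivF : deriv (fun τ : ℝ =>
        ((K * (sn (s0 + τ) * (1 / sn (t0 + ε * τ))),
          K * (cn (s0 + τ) * (dn (t0 + ε * τ) / sn (t0 + ε * τ)))) : ℝ × ℝ))
      =ᶠ[nhds (0:ℝ)] fun τ => ((X1 τ, Y1 τ) : ℝ × ℝ) :=
    hev.mono fun τ h => (lemA τ h).deriv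
  have key1 : deriv (fun τ : ℝ =>
        ((K * (sn (s0 + τ) * (1 / sn (t0 + ε * τ))),
          K * (cn (s0 + τ) * (dn (t0 + ε * τ) / sn (t0 + ε * τ)))) : ℝ × ℝ)) 0 = (X1 0, Y1 0) :=
    (lemA 0 hne0).deriv
  have key2 := hderivF.deriv_eq
  -- second derivative of X1 at 0
  have hg2 : HasDerivAt (fun τ => sn (t0 + ε * τ) ^ 2)
      ((2:ℕ) * sn (t0 + ε * 0) ^ 1 * (cn (t0 + ε * 0) * dn (t0 + ε * 0) * ε)) 0 := (hs 0).pow 2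
  have hg2ne : sn (t0 + ε * 0) ^ 2 ≠ 0 := pow_ne_zero 2 hne0
  have hNf : HasDerivAt (fun τ => cn (s0 + τ) * dn (s0 + τ) * sn (t0 + ε * τ)
      - ε * (sn (s0 + τ) * cn (t0 + ε * τ) * dn (t0 + ε * τ)))
      ((( -(sn (s0 + 0) * dn (s0 + 0)) * dn (s0 + 0) + cn (s0 + 0) * (-(k ^ 2 * sn (s0 + 0) * cn (s0 + 0)))) * sn (t0 + ε * 0)
        + cn (s0 + 0) * dn (s0 + 0) * (cn (t0 + ε * 0) * dn (t0 + ε * 0) * ε))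
       - ε * ((cn (s0 + 0) * dn (s0 + 0) * cn (t0 + ε * 0) + sn (s0 + 0) * (-(sn (t0 + ε * 0) * dn (t0 + ε * 0)) * ε)) * dn (t0 + ε * 0)
        + sn (s0 + 0) * cn (t0 + ε * 0) * (-(k ^ 2 * sn (t0 + ε * 0) * cn (t0 + ε * 0)) * ε))) 0 :=
    (((hC 0).mul (hD 0)).mul (hs 0)).sub ((((hS 0).mul (hc 0)).mul (hd 0)).const_mul ε)
  have hMf : HasDerivAt (fun τ => -(sn (s0 + τ) * dn (s0 + τ) * dn (t0 + ε * τ) * sn (t0 + ε * τ)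
      + ε * (cn (s0 + τ) * cn (t0 + ε * τ))))
      (-(((cn (s0 + 0) * dn (s0 + 0) * dn (s0 + 0) + sn (s0 + 0) * (-(k ^ 2 * sn (s0 + 0) * cn (s0 + 0)))) * dn (t0 + ε * 0)
          + sn (s0 + 0) * dn (s0 + 0) * (-(k ^ 2 * sn (t0 + ε * 0) * cn (t0 + ε * 0)) * ε)) * sn (t0 + ε * 0)
        + sn (s0 + 0) * dn (s0 + 0) * dn (t0 + ε * 0) * (cn (t0 + ε * 0) * dn (t0 + ε * 0) * ε)
        + ε * (-(sn (s0 + 0) * dn (s0 + 0)) * cn (t0 + ε * 0) + cn (s0 + 0) * (-(sn (t0 + ε * 0) * dn (t0 + ε * 0)) * ε)))) 0 :=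
    (((((hS 0).mul (hD 0)).mul (hd 0)).mul (hs 0)).add (((hC 0).mul (hc 0)).const_mul ε)).neg
  have hX2 := (hNf.div hg2 hg2ne).const_mul K
  have hY2 := (hMf.div hg2 hg2ne).const_mul K
  have hpair := (hX2.prodMk hY2)
  have key3 := hpair.deriv
  simp only [Pi.div_apply] at key3
  rw [key2, key1]
  simp only [hX1def, hY1def]
  rw [key3]
  simp only [add_zero, mul_zero]
  push_cast
  apply straight_aux
  · linear_combination
      (K ^ 2 * (((-1) * (dn s0) * (sn t0)^4 * (dn t0) + (1) * (dn s0)^3 * (sn t0)^4 * (dn t0) + (1) * (k)^2 * (ε) * (sn s0) * (cn s0) * (sn t0)^3 * (cn t0))) / sn t0 ^ 6) * (hpyth s0) +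
      (K ^ 2 * (((1) * (dn s0) * (sn t0)^4 * (dn t0) + (-1) * (k)^2 * (ε) * (sn s0) * (cn s0) * (sn t0)^5 * (cn t0))) / sn t0 ^ 6) * (hdn2 s0) +
      (K ^ 2 * (((-1) * (sn s0)^2 * (dn s0) * (sn t0)^2 * (dn t0)^3 + (1) * (ε)^2 * (sn s0)^2 * (dn s0) * (sn t0)^2 * (dn t0) + (-1) * (k)^2 * (ε)^3 * (sn s0) * (cn s0) * (sn t0)^3 * (cn t0))) / sn t0 ^ 6) * (hpyth t0) +
      (K ^ 2 * (((-1) * (sn s0)^2 * (dn s0) * (sn t0)^2 * (dn t0) + (1) * (sn s0)^2 * (dn s0) * (sn t0)^4 * (dn t0) + (-1) * (ε)^2 * (sn s0)^2 * (dn s0) * (sn t0)^4 * (dn t0) + (1) * (k)^2 * (ε) * (sn s0)^3 * (cn s0) * (sn t0)^3 * (cn t0))) / sn t0 ^ 6) * (hdn2 t0) +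
      (K ^ 2 * (((-1) * (cn s0)^2 * (dn s0) * (sn t0)^4 * (dn t0) + (1) * (sn s0)^2 * (dn s0) * (sn t0)^2 * (dn t0) + (-1) * (sn s0)^2 * (dn s0) * (sn t0)^2 * (cn t0)^2 * (dn t0)^3 + (-2) * (sn s0)^2 * (dn s0) * (sn t0)^4 * (dn t0) + (1) * (k)^2 * (sn s0)^2 * (dn s0) * (sn t0)^6 * (dn t0) + (-1) * (k)^2 * (ε) * (sn s0) * (cn s0) * (sn t0)^3 * (cn t0) + (1) * (k)^2 * (ε) * (sn s0) * (cn s0) * (sn t0)^5 * (cn t0))) / sn t0 ^ 6) * (he)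
  · have hac : (0:ℝ) < a - c := by linarith
    have hK2 : K ^ 2 = a - c := Real.sq_sqrt hac.le
    have hk1 : k ^ 2 < 1 := by rw [hk]; exact (div_lt_one hac).mpr (by linarith)
    have hB1 : 0 < sn t0 ^ 2 := by positivity
    have hS1 : sn s0 ^ 2 ≤ 1 := by nlinarith [hpyth s0, sq_nonneg (cn s0)]
    have hB1le : sn t0 ^ 2 ≤ 1 := by nlinarith [hpyth t0, sq_nonneg (cn t0)]
    have hD2 : 0 < dn s0 ^ 2 := by
      nlinarith [hdn2 s0, mul_nonneg (sq_nonneg k) (sub_nonneg.mpr hS1)]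
    have hdb2 : 0 < dn t0 ^ 2 := by
      nlinarith [hdn2 t0, mul_nonneg (sq_nonneg k) (sub_nonneg.mpr hB1le)]
    have hdble : dn t0 ^ 2 ≤ 1 := by nlinarith [hdn2 t0, sq_nonneg (k * sn t0)]
    have hf1 : 0 < dn s0 ^ 2 * sn t0 ^ 2 + cn t0 ^ 2 := by
      nlinarith [mul_pos hD2 hB1, sq_nonneg (cn t0)]
    have hf2 : 0 < cn s0 ^ 2 + sn s0 ^ 2 * dn t0 ^ 2 := by
      nlinarith [hdb2, hpyth s0, mul_nonneg (sq_nonneg (cn s0)) (sub_nonneg.mpr hdble)]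
    have heq : (K * ((cn s0 * dn s0 * sn t0 - ε * (sn s0 * cn t0 * dn t0)) / sn t0 ^ 2)) ^ 2
        + (K * (-(sn s0 * dn s0 * dn t0 * sn t0 + ε * (cn s0 * cn t0)) / sn t0 ^ 2)) ^ 2
        = (a - c) * ((dn s0 ^ 2 * sn t0 ^ 2 + cn t0 ^ 2) * (cn s0 ^ 2 + sn s0 ^ 2 * dn t0 ^ 2)) / sn t0 ^ 4 := by
      linear_combination
        ((((-1) * (c) + (-1) * (a) + (1) * (cn t0)^2 * (c) + (1) * (cn t0)^2 * (a) + (2) * (sn t0)^2 * (c) + (1) * (sn t0)^2 * (a) + (-1) * (dn s0)^2 * (sn t0)^2 * (a) + (1) * (dn s0)^2 * (sn t0)^2 * (K)^2 + (-1) * (k)^2 * (sn s0)^2 * (sn t0)^2 * (c))) / sn t0 ^ 4) * (hpyth s0) +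
      ((((-1) * (sn t0)^2 * (c) + (1) * (cn s0)^2 * (sn t0)^2 * (c) + (1) * (sn s0)^2 * (sn t0)^2 * (c) + (-1) * (sn s0)^2 * (sn t0)^2 * (a) + (1) * (sn s0)^2 * (sn t0)^2 * (dn t0)^2 * (c) + (1) * (sn s0)^2 * (sn t0)^2 * (dn t0)^2 * (K)^2 + (1) * (k)^2 * (sn s0)^2 * (sn t0)^4 * (a))) / sn t0 ^ 4) * (hdn2 s0) +
      ((((1) * (c) + (1) * (a) + (-1) * (cn s0)^2 * (c) + (-1) * (cn s0)^2 * (a) + (-1) * (sn s0)^2 * (c) + (-2) * (sn s0)^2 * (a) + (1) * (sn s0)^2 * (dn t0)^2 * (c) + (1) * (ε)^2 * (sn s0)^2 * (dn t0)^2 * (K)^2 + (1) * (k)^2 * (sn s0)^2 * (sn t0)^2 * (a))) / sn t0 ^ 4) * (hpyth t0) +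
      ((((1) * (sn s0)^2 * (c) + (1) * (sn s0)^2 * (K)^2 + (-1) * (sn s0)^2 * (cn t0)^2 * (a) + (-1) * (sn s0)^2 * (dn s0)^2 * (sn t0)^2 * (a) + (-1) * (k)^2 * (sn s0)^4 * (sn t0)^2 * (c) + (-1) * (k)^2 * (sn s0)^4 * (sn t0)^2 * (K)^2)) / sn t0 ^ 4) * (hdn2 t0) +
      ((((1) * (cn s0)^2 * (cn t0)^2 * (K)^2 + (1) * (sn s0)^2 * (dn t0)^2 * (K)^2 + (-1) * (sn s0)^2 * (sn t0)^2 * (dn t0)^2 * (K)^2)) / sn t0 ^ 4) * (he) +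
      ((((1) * (dn s0)^2 * (sn t0)^2 + (1) * (cn s0)^2 * (cn t0)^2 + (1) * (sn s0)^2 + (-1) * (sn s0)^2 * (dn s0)^2 * (sn t0)^2 + (-1) * (k)^2 * (sn s0)^2 * (sn t0)^2 + (-1) * (k)^2 * (sn s0)^4 * (sn t0)^2 + (1) * (k)^4 * (sn s0)^4 * (sn t0)^4)) / sn t0 ^ 4) * (hK2)
    rw [heq]
    exact ne_of_gt (div_pos (mul_pos hac (mul_pos hf1 hf2)) (by positivity))
end

section
/- Let a > b > c and define U(u) = (u')²/(4(u+a)(u+b)(u+c)) for a reparametrisation u = u(s). For the confocal coordinate surfaces u_l = const, parametrised via u_i = u_i(s_i), the ratio of the coefficients e/g of the second fundamental form e ds_i² + g ds_k² equals −U_i(s_i)/U_k(s_k). Consequently, if u1, u2, u3 are chosen so that U1 = −U2 = U3 = const > 0, then the second fundamental forms satisfy II₁₂ ∝ ds1² + ds2², II₁₃ ∝ ds1² − ds3², II₂₃ ∝ ds2² + ds3². -/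
/-- Euclidean dot product on ℝ × ℝ × ℝ. -/
def dot3 (p q : ℝ × ℝ × ℝ) : ℝ := p.1 * q.1 + p.2.1 * q.2.1 + p.2.2 * q.2.2

/-- Cross product on ℝ × ℝ × ℝ. -/
def cross3 (p q : ℝ × ℝ × ℝ) : ℝ × ℝ × ℝ :=
  (p.2.1 * q.2.2 - p.2.2 * q.2.1, p.2.2 * q.1 - p.1 * q.2.2, p.1 * q.2.1 - p.2.1 * q.1)


open Filter in
lemma comp_deriv (u : ℝ → ℝ) (hu : Differentiable ℝ u) (q k t : ℝ)
    (hpos : 0 < (u t + q) * k) :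
    HasDerivAt (fun x => Real.sqrt ((u x + q) * k))
      (deriv u t * Real.sqrt ((u t + q) * k) / (2 * (u t + q))) t := by
  have hd : HasDerivAt (fun x => (u x + q) * k) (deriv u t * k) t :=
    (((hu t).hasDerivAt).add_const q).mul_const k
  have h0 : (u t + q) * k ≠ 0 := ne_of_gt hpos
  have hq : u t + q ≠ 0 := fun h => by simp [h] at hpos
  have hs : Real.sqrt ((u t + q) * k) ≠ 0 := by positivity
  have hsq : Real.sqrt ((u t + q) * k) ^ 2 = (u t + q) * k := Real.sq_sqrt hpos.le
  have := hd.sqrt h0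
  convert this using 1
  field_simp
  linear_combination (deriv u t) * hsq

lemma comp_deriv_phi (u : ℝ → ℝ) (hu : ContDiff ℝ 2 u) (q k t : ℝ)
    (hpos : 0 < (u t + q) * k) :
    HasDerivAt (fun x => deriv u x * Real.sqrt ((u x + q) * k) / (2 * (u x + q)))
      (deriv (deriv u) t * Real.sqrt ((u t + q) * k) / (2 * (u t + q))
        - (deriv u t) ^ 2 * Real.sqrt ((u t + q) * k) / (4 * (u t + q) ^ 2)) t := by
  have hdu : Differentiable ℝ (deriv u) := by
    have := (contDiff_succ_iff_deriv.mp (by exact_mod_cast hu : ContDiff ℝ (1+1) u)).2.2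
    exact this.differentiable one_ne_zero
  have hq : u t + q ≠ 0 := fun h => by simp [h] at hpos
  have hd' : HasDerivAt (deriv u) (deriv (deriv u) t) t := (hdu t).hasDerivAt
  have hsqrt := comp_deriv u (hu.differentiable (by norm_num)) q k t hpos
  have hnum := hd'.mul hsqrt
  have hden : HasDerivAt (fun x => 2 * (u x + q)) (2 * deriv u t) t := by
    simpa using ((((hu.differentiable (by norm_num)) t).hasDerivAt).add_const q).const_mul 2
  have hden0 : 2 * (u t + q) ≠ 0 := by simp [hq]
  have := hnum.div hden hden0
  exact this.congr_deriv (by simp only [Pi.mul_apply]; field_simp; ring)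

open Filter in
lemma dir_derivs (u : ℝ → ℝ) (hu : ContDiff ℝ 2 u) (ka kb kc t a b c : ℝ)
    (hpa : 0 < (u t + a) * ka) (hpb : 0 < (u t + b) * kb) (hpc : 0 < (u t + c) * kc) :
    deriv (fun x => ((Real.sqrt ((u x + a) * ka), Real.sqrt ((u x + b) * kb),
        Real.sqrt ((u x + c) * kc)) : ℝ × ℝ × ℝ)) t
      = (deriv u t * Real.sqrt ((u t + a) * ka) / (2 * (u t + a)),
         deriv u t * Real.sqrt ((u t + b) * kb) / (2 * (u t + b)),
         deriv u t * Real.sqrt ((u t + c) * kc) / (2 * (u t + c))) ∧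
    deriv (fun x => deriv (fun y => ((Real.sqrt ((u y + a) * ka), Real.sqrt ((u y + b) * kb),
        Real.sqrt ((u y + c) * kc)) : ℝ × ℝ × ℝ)) x) t
      = (deriv (deriv u) t * Real.sqrt ((u t + a) * ka) / (2 * (u t + a))
           - (deriv u t) ^ 2 * Real.sqrt ((u t + a) * ka) / (4 * (u t + a) ^ 2),
         deriv (deriv u) t * Real.sqrt ((u t + b) * kb) / (2 * (u t + b))
           - (deriv u t) ^ 2 * Real.sqrt ((u t + b) * kb) / (4 * (u t + b) ^ 2),
         deriv (deriv u) t * Real.sqrt ((u t + c) * kc) / (2 * (u t + c))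
           - (deriv u t) ^ 2 * Real.sqrt ((u t + c) * kc) / (4 * (u t + c) ^ 2)) := by
  have hud : Differentiable ℝ u := hu.differentiable (by norm_num)
  have hvec : ∀ x : ℝ, 0 < (u x + a) * ka → 0 < (u x + b) * kb → 0 < (u x + c) * kc →
      deriv (fun y => ((Real.sqrt ((u y + a) * ka), Real.sqrt ((u y + b) * kb),
        Real.sqrt ((u y + c) * kc)) : ℝ × ℝ × ℝ)) x
      = (deriv u x * Real.sqrt ((u x + a) * ka) / (2 * (u x + a)),
         deriv u x * Real.sqrt ((u x + b) * kb) / (2 * (u x + b)),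
         deriv u x * Real.sqrt ((u x + c) * kc) / (2 * (u x + c))) := by
    intro x ha hb hc
    exact ((comp_deriv u hud a ka x ha).prodMk
      ((comp_deriv u hud b kb x hb).prodMk (comp_deriv u hud c kc x hc))).deriv
  refine ⟨hvec t hpa hpb hpc, ?_⟩
  have hev : ∀ᶠ x in nhds t, 0 < (u x + a) * ka ∧ 0 < (u x + b) * kb ∧ 0 < (u x + c) * kc := by
    have c1 : ContinuousAt (fun x => (u x + a) * ka) t :=
      ((hud.continuous.add continuous_const).mul continuous_const).continuousAt
    have c2 : ContinuousAt (fun x => (u x + b) * kb) t :=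
      ((hud.continuous.add continuous_const).mul continuous_const).continuousAt
    have c3 : ContinuousAt (fun x => (u x + c) * kc) t :=
      ((hud.continuous.add continuous_const).mul continuous_const).continuousAt
    filter_upwards [continuousAt_const.eventually_lt c1 hpa,
      continuousAt_const.eventually_lt c2 hpb,
      continuousAt_const.eventually_lt c3 hpc] with x h1 h2 h3
    exact ⟨h1, h2, h3⟩
  have heq : (deriv (fun y => ((Real.sqrt ((u y + a) * ka), Real.sqrt ((u y + b) * kb),
        Real.sqrt ((u y + c) * kc)) : ℝ × ℝ × ℝ)))
      =ᶠ[nhds t] fun x => ((deriv u x * Real.sqrt ((u x + a) * ka) / (2 * (u x + a)),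
         deriv u x * Real.sqrt ((u x + b) * kb) / (2 * (u x + b)),
         deriv u x * Real.sqrt ((u x + c) * kc) / (2 * (u x + c))) : ℝ × ℝ × ℝ) :=
    hev.mono fun x hx => hvec x hx.1 hx.2.1 hx.2.2
  rw [Filter.EventuallyEq.deriv_eq heq]
  exact ((comp_deriv_phi u hu a ka t hpa).prodMk
    ((comp_deriv_phi u hu b kb t hpb).prodMk (comp_deriv_phi u hu c kc t hpc))).deriv


lemma core_id' (Ai Bi Ci Aj Bj Cj di dj ddi : ℝ)
    (hAi : Ai ≠ 0) (hBi : Bi ≠ 0) (hCi : Ci ≠ 0)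
    (hAj : Aj ≠ 0) (hBj : Bj ≠ 0) (hCj : Cj ≠ 0)
    (hB : Bj = Bi + (Aj - Ai)) (hC : Cj = Ci + (Aj - Ai)) :
    (ddi / (2 * Ai) - di ^ 2 / (4 * Ai ^ 2)) *
        ((di / (2 * Bi)) * (dj / (2 * Cj)) - (di / (2 * Ci)) * (dj / (2 * Bj)))
    + (ddi / (2 * Bi) - di ^ 2 / (4 * Bi ^ 2)) *
        ((di / (2 * Ci)) * (dj / (2 * Aj)) - (di / (2 * Ai)) * (dj / (2 * Cj)))
    + (ddi / (2 * Ci) - di ^ 2 / (4 * Ci ^ 2)) *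
        ((di / (2 * Ai)) * (dj / (2 * Bj)) - (di / (2 * Bi)) * (dj / (2 * Aj)))
    = di ^ 3 * dj * (Ai - Aj) ^ 2 * (Ai - Bi) * (Ai - Ci) * (Bi - Ci)
        / (16 * ((Ai * Bi * Ci) ^ 2 * (Aj * Bj * Cj))) := by
  have hD : (Ai * Bi * Ci) ^ 2 * (Aj * Bj * Cj) ≠ 0 := by positivity
  have t1 : (1/Ai^2) * (1/Bi * (1/Cj) - 1/Ci * (1/Bj))
      = (Bi * Ci^2 * Aj * Bj - Bi^2 * Ci * Aj * Cj) / ((Ai * Bi * Ci) ^ 2 * (Aj * Bj * Cj)) := by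
    field_simp
  have t2 : (1/Bi^2) * (1/Ai * (1/Cj) - 1/Ci * (1/Aj))
      = (Ai * Ci^2 * Aj * Bj - Ai^2 * Ci * Bj * Cj) / ((Ai * Bi * Ci) ^ 2 * (Aj * Bj * Cj)) := by
    field_simp
  have t3 : (1/Ci^2) * (1/Ai * (1/Bj) - 1/Bi * (1/Aj))
      = (Ai * Bi^2 * Aj * Cj - Ai^2 * Bi * Bj * Cj) / ((Ai * Bi * Ci) ^ 2 * (Aj * Bj * Cj)) := by
    field_simp
  have step1 : (ddi / (2 * Ai) - di ^ 2 / (4 * Ai ^ 2)) *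
        ((di / (2 * Bi)) * (dj / (2 * Cj)) - (di / (2 * Ci)) * (dj / (2 * Bj)))
    + (ddi / (2 * Bi) - di ^ 2 / (4 * Bi ^ 2)) *
        ((di / (2 * Ci)) * (dj / (2 * Aj)) - (di / (2 * Ai)) * (dj / (2 * Cj)))
    + (ddi / (2 * Ci) - di ^ 2 / (4 * Ci ^ 2)) *
        ((di / (2 * Ai)) * (dj / (2 * Bj)) - (di / (2 * Bi)) * (dj / (2 * Aj)))
      = -(di ^ 3 * dj / 16) *
        ((1/Ai^2) * (1/Bi * (1/Cj) - 1/Ci * (1/Bj))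
         - (1/Bi^2) * (1/Ai * (1/Cj) - 1/Ci * (1/Aj))
         + (1/Ci^2) * (1/Ai * (1/Bj) - 1/Bi * (1/Aj))) := by
    ring
  rw [step1, t1, t2, t3, div_sub_div_same, ← add_div]
  have hnum : Bi * Ci^2 * Aj * Bj - Bi^2 * Ci * Aj * Cj
      - (Ai * Ci^2 * Aj * Bj - Ai^2 * Ci * Bj * Cj)
      + (Ai * Bi^2 * Aj * Cj - Ai^2 * Bi * Bj * Cj)
      = -((Ai - Aj) ^ 2 * (Ai - Bi) * (Ai - Ci) * (Bi - Ci)) := by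
    rw [hB, hC]; ring
  rw [hnum]
  field_simp

lemma pair_e (a b c X Y Z pi pj di dj ddi : ℝ)
    (hAi : pi + a ≠ 0) (hBi : pi + b ≠ 0) (hCi : pi + c ≠ 0)
    (hAj : pj + a ≠ 0) (hBj : pj + b ≠ 0) (hCj : pj + c ≠ 0) :
    dot3 (ddi * X / (2 * (pi + a)) - di ^ 2 * X / (4 * (pi + a) ^ 2),
          ddi * Y / (2 * (pi + b)) - di ^ 2 * Y / (4 * (pi + b) ^ 2),
          ddi * Z / (2 * (pi + c)) - di ^ 2 * Z / (4 * (pi + c) ^ 2))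
      (cross3 (di * X / (2 * (pi + a)), di * Y / (2 * (pi + b)), di * Z / (2 * (pi + c)))
              (dj * X / (2 * (pj + a)), dj * Y / (2 * (pj + b)), dj * Z / (2 * (pj + c))))
    = X * Y * Z * (di ^ 3 * dj * (pi - pj) ^ 2 * (a - b) * (a - c) * (b - c)
        / (16 * (((pi + a) * (pi + b) * (pi + c)) ^ 2 * ((pj + a) * (pj + b) * (pj + c))))) := by
  have hcore := core_id' (pi + a) (pi + b) (pi + c) (pj + a) (pj + b) (pj + c) di dj ddi
    hAi hBi hCi hAj hBj hCj (by ring) (by ring)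
  have h1 : dot3 (ddi * X / (2 * (pi + a)) - di ^ 2 * X / (4 * (pi + a) ^ 2),
          ddi * Y / (2 * (pi + b)) - di ^ 2 * Y / (4 * (pi + b) ^ 2),
          ddi * Z / (2 * (pi + c)) - di ^ 2 * Z / (4 * (pi + c) ^ 2))
      (cross3 (di * X / (2 * (pi + a)), di * Y / (2 * (pi + b)), di * Z / (2 * (pi + c)))
              (dj * X / (2 * (pj + a)), dj * Y / (2 * (pj + b)), dj * Z / (2 * (pj + c))))
      = X * Y * Z * ((ddi / (2 * (pi + a)) - di ^ 2 / (4 * (pi + a) ^ 2)) *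
        ((di / (2 * (pi + b))) * (dj / (2 * (pj + c))) - (di / (2 * (pi + c))) * (dj / (2 * (pj + b))))
    + (ddi / (2 * (pi + b)) - di ^ 2 / (4 * (pi + b) ^ 2)) *
        ((di / (2 * (pi + c))) * (dj / (2 * (pj + a))) - (di / (2 * (pi + a))) * (dj / (2 * (pj + c))))
    + (ddi / (2 * (pi + c)) - di ^ 2 / (4 * (pi + c) ^ 2)) *
        ((di / (2 * (pi + a))) * (dj / (2 * (pj + b))) - (di / (2 * (pi + b))) * (dj / (2 * (pj + a))))) := by
    simp only [dot3, cross3]; ring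
  rw [h1, hcore,
      show ((pi + a) - (pj + a)) ^ 2 = (pi - pj)^2 by ring,
      show ((pi + a) - (pi + b)) = a - b by ring,
      show ((pi + a) - (pi + c)) = a - c by ring,
      show ((pi + b) - (pi + c)) = b - c by ring]

lemma dot_cross_swap (p q r : ℝ × ℝ × ℝ) : dot3 p (cross3 q r) = -dot3 p (cross3 r q) := by
  simp only [dot3, cross3]; ring

lemma pair_ratio (a b c X Y Z pi pj di dj ddi ddj : ℝ)
    (hX : X ≠ 0) (hY : Y ≠ 0) (hZ : Z ≠ 0)
    (hAi : pi + a ≠ 0) (hBi : pi + b ≠ 0) (hCi : pi + c ≠ 0)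
    (hAj : pj + a ≠ 0) (hBj : pj + b ≠ 0) (hCj : pj + c ≠ 0)
    (hij : pi - pj ≠ 0) (hab : a - b ≠ 0) (hac : a - c ≠ 0) (hbc : b - c ≠ 0) :
    dot3 (ddi * X / (2 * (pi + a)) - di ^ 2 * X / (4 * (pi + a) ^ 2),
          ddi * Y / (2 * (pi + b)) - di ^ 2 * Y / (4 * (pi + b) ^ 2),
          ddi * Z / (2 * (pi + c)) - di ^ 2 * Z / (4 * (pi + c) ^ 2))
      (cross3 (di * X / (2 * (pi + a)), di * Y / (2 * (pi + b)), di * Z / (2 * (pi + c)))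
              (dj * X / (2 * (pj + a)), dj * Y / (2 * (pj + b)), dj * Z / (2 * (pj + c))))
    / dot3 (ddj * X / (2 * (pj + a)) - dj ^ 2 * X / (4 * (pj + a) ^ 2),
          ddj * Y / (2 * (pj + b)) - dj ^ 2 * Y / (4 * (pj + b) ^ 2),
          ddj * Z / (2 * (pj + c)) - dj ^ 2 * Z / (4 * (pj + c) ^ 2))
      (cross3 (di * X / (2 * (pi + a)), di * Y / (2 * (pi + b)), di * Z / (2 * (pi + c)))
              (dj * X / (2 * (pj + a)), dj * Y / (2 * (pj + b)), dj * Z / (2 * (pj + c))))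
    = -(di ^ 2 / (4 * (pi + a) * (pi + b) * (pi + c))
        / (dj ^ 2 / (4 * (pj + a) * (pj + b) * (pj + c)))) := by
  by_cases hdi : di = 0
  · subst hdi; simp [dot3, cross3]
  by_cases hdj : dj = 0
  · subst hdj; simp [dot3, cross3]
  have he := pair_e a b c X Y Z pi pj di dj ddi hAi hBi hCi hAj hBj hCj
  have hg := pair_e a b c X Y Z pj pi dj di ddj hAj hBj hCj hAi hBi hCi
  rw [he, dot_cross_swap, hg]
  have hXYZ : X * Y * Z ≠ 0 := by simp [hX, hY, hZ]
  rw [div_neg]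
  congr 1
  rw [mul_div_mul_left _ _ hXYZ]
  have hg1 : dj ^ 3 * di * (pj - pi) ^ 2 * (a - b) * (a - c) * (b - c)
      / (16 * (((pj + a) * (pj + b) * (pj + c)) ^ 2 * ((pi + a) * (pi + b) * (pi + c)))) ≠ 0 := by
    apply div_ne_zero
    · simp only [mul_ne_zero_iff]
      exact ⟨⟨⟨⟨⟨pow_ne_zero _ hdj, hdi⟩, pow_ne_zero _ (fun h => hij (by linarith [sub_eq_zero.mp h] : pi - pj = 0))⟩, hab⟩, hac⟩, hbc⟩
    · positivity
  have hq : dj ^ 2 / (4 * (pj + a) * (pj + b) * (pj + c)) ≠ 0 := by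
    apply div_ne_zero (pow_ne_zero _ hdj)
    simp only [mul_ne_zero_iff]
    exact ⟨⟨⟨by norm_num, hAj⟩, hBj⟩, hCj⟩
  rw [div_eq_div_iff hg1 hq]
  field_simp
  ring


lemma pair_g_ne (a b c X Y Z pi pj di dj ddj : ℝ)
    (hX : X ≠ 0) (hY : Y ≠ 0) (hZ : Z ≠ 0)
    (hAi : pi + a ≠ 0) (hBi : pi + b ≠ 0) (hCi : pi + c ≠ 0)
    (hAj : pj + a ≠ 0) (hBj : pj + b ≠ 0) (hCj : pj + c ≠ 0)
    (hdi : di ≠ 0) (hdj : dj ≠ 0)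
    (hij : pi - pj ≠ 0) (hab : a - b ≠ 0) (hac : a - c ≠ 0) (hbc : b - c ≠ 0) :
    dot3 (ddj * X / (2 * (pj + a)) - dj ^ 2 * X / (4 * (pj + a) ^ 2),
          ddj * Y / (2 * (pj + b)) - dj ^ 2 * Y / (4 * (pj + b) ^ 2),
          ddj * Z / (2 * (pj + c)) - dj ^ 2 * Z / (4 * (pj + c) ^ 2))
      (cross3 (di * X / (2 * (pi + a)), di * Y / (2 * (pi + b)), di * Z / (2 * (pi + c)))
              (dj * X / (2 * (pj + a)), dj * Y / (2 * (pj + b)), dj * Z / (2 * (pj + c)))) ≠ 0 := by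
  rw [dot_cross_swap, pair_e a b c X Y Z pj pi dj di ddj hAj hBj hCj hAi hBi hCi]
  rw [neg_ne_zero]
  refine mul_ne_zero (mul_ne_zero (mul_ne_zero hX hY) hZ) (div_ne_zero ?_ ?_)
  · refine mul_ne_zero (mul_ne_zero (mul_ne_zero (mul_ne_zero (mul_ne_zero
      (pow_ne_zero _ hdj) hdi) (pow_ne_zero _ (fun h => hij (by linarith [sub_eq_zero.mp h] : pi - pj = 0)))) hab) hac) hbc
  · positivity

/-- The ratio e/g of the second fundamental form coefficients of the confocal
coordinate surfaces equals −U_i(s_i)/U_k(s_k), and if U1 = −U2 = U3 = const > 0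
the second fundamental forms are conformally flat:
II₁₂ ∝ ds1² + ds2², II₁₃ ∝ ds1² − ds3², II₂₃ ∝ ds2² + ds3². -/
theorem second_fundamental_form_factorisation
    (a b c : ℝ) (hab : b < a) (hbc : c < b)
    (u1 u2 u3 : ℝ → ℝ)
    (hu1 : ContDiff ℝ 2 u1) (hu2 : ContDiff ℝ 2 u2) (hu3 : ContDiff ℝ 2 u3)
    (r : ℝ → ℝ → ℝ → ℝ × ℝ × ℝ)
    (hr : ∀ s1 s2 s3, r s1 s2 s3 =
      (Real.sqrt ((u1 s1 + a) * (u2 s2 + a) * (u3 s3 + a) / ((a - b) * (a - c))),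
       Real.sqrt ((u1 s1 + b) * (u2 s2 + b) * (u3 s3 + b) / ((b - a) * (b - c))),
       Real.sqrt ((u1 s1 + c) * (u2 s2 + c) * (u3 s3 + c) / ((c - a) * (c - b)))))
    (U : (ℝ → ℝ) → ℝ → ℝ)
    (hU : ∀ u s, U u s = (deriv u s) ^ 2 / (4 * (u s + a) * (u s + b) * (u s + c)))
    (s1 s2 s3 : ℝ)
    (hdom1 : -a < u1 s1) (hdom1' : u1 s1 < -b)
    (hdom2 : -b < u2 s2) (hdom2' : u2 s2 < -c) (hdom3 : -c < u3 s3)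
    (r1 r2 r3 r11 r22 r33 : ℝ × ℝ × ℝ)
    (hr1 : r1 = deriv (fun t => r t s2 s3) s1)
    (hr2 : r2 = deriv (fun t => r s1 t s3) s2)
    (hr3 : r3 = deriv (fun t => r s1 s2 t) s3)
    (hr11 : r11 = deriv (fun t => deriv (fun t' => r t' s2 s3) t) s1)
    (hr22 : r22 = deriv (fun t => deriv (fun t' => r s1 t' s3) t) s2)
    (hr33 : r33 = deriv (fun t => deriv (fun t' => r s1 s2 t') t) s3) :
    (dot3 r11 (cross3 r1 r2) / dot3 r22 (cross3 r1 r2) = -(U u1 s1 / U u2 s2) ∧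
     dot3 r11 (cross3 r1 r3) / dot3 r33 (cross3 r1 r3) = -(U u1 s1 / U u3 s3) ∧
     dot3 r22 (cross3 r2 r3) / dot3 r33 (cross3 r2 r3) = -(U u2 s2 / U u3 s3)) ∧
    (∀ C : ℝ, 0 < C →
      (∀ s, U u1 s = C) → (∀ s, U u2 s = -C) → (∀ s, U u3 s = C) →
      dot3 r11 (cross3 r1 r2) = dot3 r22 (cross3 r1 r2) ∧
      dot3 r11 (cross3 r1 r3) = -dot3 r33 (cross3 r1 r3) ∧
      dot3 r22 (cross3 r2 r3) = dot3 r33 (cross3 r2 r3)) := by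
  have hab' : 0 < a - b := by linarith
  have hac' : 0 < a - c := by linarith
  have hbc' : 0 < b - c := by linarith
  have hA1 : 0 < u1 s1 + a := by linarith
  have hB1 : u1 s1 + b < 0 := by linarith
  have hC1 : u1 s1 + c < 0 := by linarith
  have hA2 : 0 < u2 s2 + a := by linarith
  have hB2 : 0 < u2 s2 + b := by linarith
  have hC2 : u2 s2 + c < 0 := by linarith
  have hA3 : 0 < u3 s3 + a := by linarith
  have hB3 : 0 < u3 s3 + b := by linarith
  have hC3 : 0 < u3 s3 + c := by linarith
  have hVx : 0 < (u1 s1 + a) * (u2 s2 + a) * (u3 s3 + a) / ((a - b) * (a - c)) := div_pos (mul_pos (mul_pos hA1 hA2) hA3) (mul_pos hab' hac')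
  have hVy : 0 < (u1 s1 + b) * (u2 s2 + b) * (u3 s3 + b) / ((b - a) * (b - c)) := div_pos_iff.mpr (Or.inr ⟨mul_neg_of_neg_of_pos (mul_neg_of_neg_of_pos hB1 hB2) hB3, mul_neg_of_neg_of_pos (by linarith) (by linarith)⟩)
  have hVz : 0 < (u1 s1 + c) * (u2 s2 + c) * (u3 s3 + c) / ((c - a) * (c - b)) := div_pos_iff.mpr (Or.inl ⟨mul_pos (mul_pos_of_neg_of_neg hC1 hC2) hC3, mul_pos_of_neg_of_neg (by linarith) (by linarith)⟩)
  set X := Real.sqrt ((u1 s1 + a) * (u2 s2 + a) * (u3 s3 + a) / ((a - b) * (a - c))) with hXdef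
  set Y := Real.sqrt ((u1 s1 + b) * (u2 s2 + b) * (u3 s3 + b) / ((b - a) * (b - c))) with hYdef
  set Z := Real.sqrt ((u1 s1 + c) * (u2 s2 + c) * (u3 s3 + c) / ((c - a) * (c - b))) with hZdef
  have hX : 0 < X := Real.sqrt_pos.mpr hVx
  have hY : 0 < Y := Real.sqrt_pos.mpr hVy
  have hZ : 0 < Z := Real.sqrt_pos.mpr hVz
  have hfun1 : (fun t => r t s2 s3) = (fun t => ((Real.sqrt ((u1 t + a) * ((u2 s2 + a) * (u3 s3 + a) / ((a - b) * (a - c)))), Real.sqrt ((u1 t + b) * ((u2 s2 + b) * (u3 s3 + b) / ((b - a) * (b - c)))), Real.sqrt ((u1 t + c) * ((u2 s2 + c) * (u3 s3 + c) / ((c - a) * (c - b))))) : ℝ × ℝ × ℝ)) := by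
    funext t
    rw [hr]
    simp only [Prod.mk.injEq]
    refine ⟨?_, ?_, ?_⟩ <;> · congr 1; ring
  have hpa1 : 0 < (u1 s1 + a) * ((u2 s2 + a) * (u3 s3 + a) / ((a - b) * (a - c))) := by
    rw [show (u1 s1 + a) * ((u2 s2 + a) * (u3 s3 + a) / ((a - b) * (a - c))) = (u1 s1 + a) * (u2 s2 + a) * (u3 s3 + a) / ((a - b) * (a - c)) from by ring]
    exact hVx
  have hpb1 : 0 < (u1 s1 + b) * ((u2 s2 + b) * (u3 s3 + b) / ((b - a) * (b - c))) := by
    rw [show (u1 s1 + b) * ((u2 s2 + b) * (u3 s3 + b) / ((b - a) * (b - c))) = (u1 s1 + b) * (u2 s2 + b) * (u3 s3 + b) / ((b - a) * (b - c)) from by ring]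
    exact hVy
  have hpc1 : 0 < (u1 s1 + c) * ((u2 s2 + c) * (u3 s3 + c) / ((c - a) * (c - b))) := by
    rw [show (u1 s1 + c) * ((u2 s2 + c) * (u3 s3 + c) / ((c - a) * (c - b))) = (u1 s1 + c) * (u2 s2 + c) * (u3 s3 + c) / ((c - a) * (c - b)) from by ring]
    exact hVz
  have hd1 := dir_derivs u1 hu1 ((u2 s2 + a) * (u3 s3 + a) / ((a - b) * (a - c))) ((u2 s2 + b) * (u3 s3 + b) / ((b - a) * (b - c))) ((u2 s2 + c) * (u3 s3 + c) / ((c - a) * (c - b))) s1 a b c hpa1 hpb1 hpc1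
  have hsx1 : Real.sqrt ((u1 s1 + a) * ((u2 s2 + a) * (u3 s3 + a) / ((a - b) * (a - c)))) = X := by
    rw [hXdef]
    congr 1
    ring
  have hsy1 : Real.sqrt ((u1 s1 + b) * ((u2 s2 + b) * (u3 s3 + b) / ((b - a) * (b - c)))) = Y := by
    rw [hYdef]
    congr 1
    ring
  have hsz1 : Real.sqrt ((u1 s1 + c) * ((u2 s2 + c) * (u3 s3 + c) / ((c - a) * (c - b)))) = Z := by
    rw [hZdef]
    congr 1
    ring
  have hr1e : r1 = (deriv u1 s1 * X / (2 * (u1 s1 + a)), deriv u1 s1 * Y / (2 * (u1 s1 + b)), deriv u1 s1 * Z / (2 * (u1 s1 + c))) := by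
    rw [hr1, hfun1, hd1.1, hsx1, hsy1, hsz1]
  have hr11e : r11 = (deriv (deriv u1) s1 * X / (2 * (u1 s1 + a)) - (deriv u1 s1) ^ 2 * X / (4 * (u1 s1 + a) ^ 2), deriv (deriv u1) s1 * Y / (2 * (u1 s1 + b)) - (deriv u1 s1) ^ 2 * Y / (4 * (u1 s1 + b) ^ 2), deriv (deriv u1) s1 * Z / (2 * (u1 s1 + c)) - (deriv u1 s1) ^ 2 * Z / (4 * (u1 s1 + c) ^ 2)) := by
    rw [hr11, hfun1, hd1.2, hsx1, hsy1, hsz1]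
  have hfun2 : (fun t => r s1 t s3) = (fun t => ((Real.sqrt ((u2 t + a) * ((u1 s1 + a) * (u3 s3 + a) / ((a - b) * (a - c)))), Real.sqrt ((u2 t + b) * ((u1 s1 + b) * (u3 s3 + b) / ((b - a) * (b - c)))), Real.sqrt ((u2 t + c) * ((u1 s1 + c) * (u3 s3 + c) / ((c - a) * (c - b))))) : ℝ × ℝ × ℝ)) := by
    funext t
    rw [hr]
    simp only [Prod.mk.injEq]
    refine ⟨?_, ?_, ?_⟩ <;> · congr 1; ring
  have hpa2 : 0 < (u2 s2 + a) * ((u1 s1 + a) * (u3 s3 + a) / ((a - b) * (a - c))) := by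
    rw [show (u2 s2 + a) * ((u1 s1 + a) * (u3 s3 + a) / ((a - b) * (a - c))) = (u1 s1 + a) * (u2 s2 + a) * (u3 s3 + a) / ((a - b) * (a - c)) from by ring]
    exact hVx
  have hpb2 : 0 < (u2 s2 + b) * ((u1 s1 + b) * (u3 s3 + b) / ((b - a) * (b - c))) := by
    rw [show (u2 s2 + b) * ((u1 s1 + b) * (u3 s3 + b) / ((b - a) * (b - c))) = (u1 s1 + b) * (u2 s2 + b) * (u3 s3 + b) / ((b - a) * (b - c)) from by ring]
    exact hVy
  have hpc2 : 0 < (u2 s2 + c) * ((u1 s1 + c) * (u3 s3 + c) / ((c - a) * (c - b))) := by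
    rw [show (u2 s2 + c) * ((u1 s1 + c) * (u3 s3 + c) / ((c - a) * (c - b))) = (u1 s1 + c) * (u2 s2 + c) * (u3 s3 + c) / ((c - a) * (c - b)) from by ring]
    exact hVz
  have hd2 := dir_derivs u2 hu2 ((u1 s1 + a) * (u3 s3 + a) / ((a - b) * (a - c))) ((u1 s1 + b) * (u3 s3 + b) / ((b - a) * (b - c))) ((u1 s1 + c) * (u3 s3 + c) / ((c - a) * (c - b))) s2 a b c hpa2 hpb2 hpc2
  have hsx2 : Real.sqrt ((u2 s2 + a) * ((u1 s1 + a) * (u3 s3 + a) / ((a - b) * (a - c)))) = X := by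
    rw [hXdef]
    congr 1
    ring
  have hsy2 : Real.sqrt ((u2 s2 + b) * ((u1 s1 + b) * (u3 s3 + b) / ((b - a) * (b - c)))) = Y := by
    rw [hYdef]
    congr 1
    ring
  have hsz2 : Real.sqrt ((u2 s2 + c) * ((u1 s1 + c) * (u3 s3 + c) / ((c - a) * (c - b)))) = Z := by
    rw [hZdef]
    congr 1
    ring
  have hr2e : r2 = (deriv u2 s2 * X / (2 * (u2 s2 + a)), deriv u2 s2 * Y / (2 * (u2 s2 + b)), deriv u2 s2 * Z / (2 * (u2 s2 + c))) := by
    rw [hr2, hfun2, hd2.1, hsx2, hsy2, hsz2]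
  have hr22e : r22 = (deriv (deriv u2) s2 * X / (2 * (u2 s2 + a)) - (deriv u2 s2) ^ 2 * X / (4 * (u2 s2 + a) ^ 2), deriv (deriv u2) s2 * Y / (2 * (u2 s2 + b)) - (deriv u2 s2) ^ 2 * Y / (4 * (u2 s2 + b) ^ 2), deriv (deriv u2) s2 * Z / (2 * (u2 s2 + c)) - (deriv u2 s2) ^ 2 * Z / (4 * (u2 s2 + c) ^ 2)) := by
    rw [hr22, hfun2, hd2.2, hsx2, hsy2, hsz2]
  have hfun3 : (fun t => r s1 s2 t) = (fun t => ((Real.sqrt ((u3 t + a) * ((u1 s1 + a) * (u2 s2 + a) / ((a - b) * (a - c)))), Real.sqrt ((u3 t + b) * ((u1 s1 + b) * (u2 s2 + b) / ((b - a) * (b - c)))), Real.sqrt ((u3 t + c) * ((u1 s1 + c) * (u2 s2 + c) / ((c - a) * (c - b))))) : ℝ × ℝ × ℝ)) := by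
    funext t
    rw [hr]
    simp only [Prod.mk.injEq]
    refine ⟨?_, ?_, ?_⟩ <;> · congr 1; ring
  have hpa3 : 0 < (u3 s3 + a) * ((u1 s1 + a) * (u2 s2 + a) / ((a - b) * (a - c))) := by
    rw [show (u3 s3 + a) * ((u1 s1 + a) * (u2 s2 + a) / ((a - b) * (a - c))) = (u1 s1 + a) * (u2 s2 + a) * (u3 s3 + a) / ((a - b) * (a - c)) from by ring]
    exact hVx
  have hpb3 : 0 < (u3 s3 + b) * ((u1 s1 + b) * (u2 s2 + b) / ((b - a) * (b - c))) := by
    rw [show (u3 s3 + b) * ((u1 s1 + b) * (u2 s2 + b) / ((b - a) * (b - c))) = (u1 s1 + b) * (u2 s2 + b) * (u3 s3 + b) / ((b - a) * (b - c)) from by ring]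
    exact hVy
  have hpc3 : 0 < (u3 s3 + c) * ((u1 s1 + c) * (u2 s2 + c) / ((c - a) * (c - b))) := by
    rw [show (u3 s3 + c) * ((u1 s1 + c) * (u2 s2 + c) / ((c - a) * (c - b))) = (u1 s1 + c) * (u2 s2 + c) * (u3 s3 + c) / ((c - a) * (c - b)) from by ring]
    exact hVz
  have hd3 := dir_derivs u3 hu3 ((u1 s1 + a) * (u2 s2 + a) / ((a - b) * (a - c))) ((u1 s1 + b) * (u2 s2 + b) / ((b - a) * (b - c))) ((u1 s1 + c) * (u2 s2 + c) / ((c - a) * (c - b))) s3 a b c hpa3 hpb3 hpc3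
  have hsx3 : Real.sqrt ((u3 s3 + a) * ((u1 s1 + a) * (u2 s2 + a) / ((a - b) * (a - c)))) = X := by
    rw [hXdef]
    congr 1
    ring
  have hsy3 : Real.sqrt ((u3 s3 + b) * ((u1 s1 + b) * (u2 s2 + b) / ((b - a) * (b - c)))) = Y := by
    rw [hYdef]
    congr 1
    ring
  have hsz3 : Real.sqrt ((u3 s3 + c) * ((u1 s1 + c) * (u2 s2 + c) / ((c - a) * (c - b)))) = Z := by
    rw [hZdef]
    congr 1
    ring
  have hr3e : r3 = (deriv u3 s3 * X / (2 * (u3 s3 + a)), deriv u3 s3 * Y / (2 * (u3 s3 + b)), deriv u3 s3 * Z / (2 * (u3 s3 + c))) := by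
    rw [hr3, hfun3, hd3.1, hsx3, hsy3, hsz3]
  have hr33e : r33 = (deriv (deriv u3) s3 * X / (2 * (u3 s3 + a)) - (deriv u3 s3) ^ 2 * X / (4 * (u3 s3 + a) ^ 2), deriv (deriv u3) s3 * Y / (2 * (u3 s3 + b)) - (deriv u3 s3) ^ 2 * Y / (4 * (u3 s3 + b) ^ 2), deriv (deriv u3) s3 * Z / (2 * (u3 s3 + c)) - (deriv u3 s3) ^ 2 * Z / (4 * (u3 s3 + c) ^ 2)) := by
    rw [hr33, hfun3, hd3.2, hsx3, hsy3, hsz3]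
  have hXn : X ≠ 0 := ne_of_gt hX
  have hYn : Y ≠ 0 := ne_of_gt hY
  have hZn : Z ≠ 0 := ne_of_gt hZ
  have hA1n : u1 s1 + a ≠ 0 := ne_of_gt hA1
  have hB1n : u1 s1 + b ≠ 0 := ne_of_lt hB1
  have hC1n : u1 s1 + c ≠ 0 := ne_of_lt hC1
  have hA2n : u2 s2 + a ≠ 0 := ne_of_gt hA2
  have hB2n : u2 s2 + b ≠ 0 := ne_of_gt hB2
  have hC2n : u2 s2 + c ≠ 0 := ne_of_lt hC2
  have hA3n : u3 s3 + a ≠ 0 := ne_of_gt hA3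
  have hB3n : u3 s3 + b ≠ 0 := ne_of_gt hB3
  have hC3n : u3 s3 + c ≠ 0 := ne_of_gt hC3
  have h12 : u1 s1 - u2 s2 ≠ 0 := sub_ne_zero.mpr (by linarith)
  have h13 : u1 s1 - u3 s3 ≠ 0 := sub_ne_zero.mpr (by linarith)
  have h23 : u2 s2 - u3 s3 ≠ 0 := sub_ne_zero.mpr (by linarith)
  have habn : a - b ≠ 0 := ne_of_gt hab'
  have hacn : a - c ≠ 0 := ne_of_gt hac'
  have hbcn : b - c ≠ 0 := ne_of_gt hbc'
  have P12 : dot3 r11 (cross3 r1 r2) / dot3 r22 (cross3 r1 r2) = -(U u1 s1 / U u2 s2) := by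
    rw [hr11e, hr22e, hr1e, hr2e, hU u1 s1, hU u2 s2]
    exact pair_ratio a b c X Y Z (u1 s1) (u2 s2) (deriv u1 s1) (deriv u2 s2) (deriv (deriv u1) s1) (deriv (deriv u2) s2) hXn hYn hZn hA1n hB1n hC1n hA2n hB2n hC2n h12 habn hacn hbcn
  have P13 : dot3 r11 (cross3 r1 r3) / dot3 r33 (cross3 r1 r3) = -(U u1 s1 / U u3 s3) := by
    rw [hr11e, hr33e, hr1e, hr3e, hU u1 s1, hU u3 s3]
    exact pair_ratio a b c X Y Z (u1 s1) (u3 s3) (deriv u1 s1) (deriv u3 s3) (deriv (deriv u1) s1) (deriv (deriv u3) s3) hXn hYn hZn hA1n hB1n hC1n hA3n hB3n hC3n h13 habn hacn hbcn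
  have P23 : dot3 r22 (cross3 r2 r3) / dot3 r33 (cross3 r2 r3) = -(U u2 s2 / U u3 s3) := by
    rw [hr22e, hr33e, hr2e, hr3e, hU u2 s2, hU u3 s3]
    exact pair_ratio a b c X Y Z (u2 s2) (u3 s3) (deriv u2 s2) (deriv u3 s3) (deriv (deriv u2) s2) (deriv (deriv u3) s3) hXn hYn hZn hA2n hB2n hC2n hA3n hB3n hC3n h23 habn hacn hbcn
  refine ⟨⟨P12, P13, P23⟩, ?_⟩
  intro C hC h1C h2C h3C
  have hd1n : deriv u1 s1 ≠ 0 := by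
    intro h
    have h' := h1C s1
    rw [hU u1 s1, h] at h'
    simp at h'
    linarith [h']
  have hd2n : deriv u2 s2 ≠ 0 := by
    intro h
    have h' := h2C s2
    rw [hU u2 s2, h] at h'
    simp at h'
    linarith [h']
  have hd3n : deriv u3 s3 ≠ 0 := by
    intro h
    have h' := h3C s3
    rw [hU u3 s3, h] at h'
    simp at h'
    linarith [h']
  have hG12 : dot3 r22 (cross3 r1 r2) ≠ 0 := by
    rw [hr22e, hr1e, hr2e]
    exact pair_g_ne a b c X Y Z (u1 s1) (u2 s2) (deriv u1 s1) (deriv u2 s2) (deriv (deriv u2) s2) hXn hYn hZn hA1n hB1n hC1n hA2n hB2n hC2n hd1n hd2n h12 habn hacn hbcn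
  have hG13 : dot3 r33 (cross3 r1 r3) ≠ 0 := by
    rw [hr33e, hr1e, hr3e]
    exact pair_g_ne a b c X Y Z (u1 s1) (u3 s3) (deriv u1 s1) (deriv u3 s3) (deriv (deriv u3) s3) hXn hYn hZn hA1n hB1n hC1n hA3n hB3n hC3n hd1n hd3n h13 habn hacn hbcn
  have hG23 : dot3 r33 (cross3 r2 r3) ≠ 0 := by
    rw [hr33e, hr2e, hr3e]
    exact pair_g_ne a b c X Y Z (u2 s2) (u3 s3) (deriv u2 s2) (deriv u3 s3) (deriv (deriv u3) s3) hXn hYn hZn hA2n hB2n hC2n hA3n hB3n hC3n hd2n hd3n h23 habn hacn hbcn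
  have hCn : C ≠ 0 := ne_of_gt hC
  refine ⟨?_, ?_, ?_⟩
  · have e12 : dot3 r11 (cross3 r1 r2) / dot3 r22 (cross3 r1 r2) = 1 := by
      rw [P12, h1C s1, h2C s2, div_neg, div_self hCn, neg_neg]
    rw [div_eq_iff hG12] at e12
    linarith [e12]
  · have e13 : dot3 r11 (cross3 r1 r3) / dot3 r33 (cross3 r1 r3) = -1 := by
      rw [P13, h1C s1, h3C s3, div_self hCn]
    rw [div_eq_iff hG13] at e13
    linarith [e13]
  · have e23 : dot3 r22 (cross3 r2 r3) / dot3 r33 (cross3 r2 r3) = 1 := by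
      rw [P23, h2C s2, h3C s3, neg_div, div_self hCn, neg_neg]
    rw [div_eq_iff hG23] at e23
    linarith [e23]
end

section
/- Ivory's theorem for confocal conics in the plane: let a > b and consider the confocal family x²/(λ+a) + y²/(λ+b) = 1. For parameters λ, μ of two ellipses and the affine scaling A(x,y) = (√((μ+a)/(λ+a))x, √((μ+b)/(λ+b))y) mapping the first to the second, and any two points P, Q on the first ellipse, the distances satisfy |P − A(Q)| = |Q − A(P)|. -/
/-- Ivory's theorem for confocal ellipses in the plane. -/
theorem ivory_theorem_plane
    (a b lam mu : ℝ) (hab : b < a) (hlam : -b < lam) (hmu : -b < mu)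
    (A : ℝ × ℝ → ℝ × ℝ)
    (hA : ∀ p : ℝ × ℝ, A p =
      (Real.sqrt ((mu + a) / (lam + a)) * p.1, Real.sqrt ((mu + b) / (lam + b)) * p.2))
    (P Q : ℝ × ℝ)
    (hP : P.1 ^ 2 / (lam + a) + P.2 ^ 2 / (lam + b) = 1)
    (hQ : Q.1 ^ 2 / (lam + a) + Q.2 ^ 2 / (lam + b) = 1) :
    Real.sqrt ((P.1 - (A Q).1) ^ 2 + (P.2 - (A Q).2) ^ 2) =
      Real.sqrt ((Q.1 - (A P).1) ^ 2 + (Q.2 - (A P).2) ^ 2) := by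
  have hlb : (0:ℝ) < lam + b := by linarith
  have hla : (0:ℝ) < lam + a := by linarith
  have hmb : (0:ℝ) < mu + b := by linarith
  have hma : (0:ℝ) < mu + a := by linarith
  set α := Real.sqrt ((mu + a) / (lam + a)) with hα
  set β := Real.sqrt ((mu + b) / (lam + b)) with hβ
  have hα2 : α ^ 2 = (mu + a) / (lam + a) := by
    rw [hα, sq, Real.mul_self_sqrt (by positivity)]
  have hβ2 : β ^ 2 = (mu + b) / (lam + b) := by
    rw [hβ, sq, Real.mul_self_sqrt (by positivity)]
  rw [hA P, hA Q]
  congr 1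
  simp only [← hα, ← hβ]
  have hE : P.1 ^ 2 / (lam + a) + P.2 ^ 2 / (lam + b)
      = Q.1 ^ 2 / (lam + a) + Q.2 ^ 2 / (lam + b) := by rw [hP, hQ]
  have h1 : P.1 ^ 2 * (lam + b) + P.2 ^ 2 * (lam + a)
      = Q.1 ^ 2 * (lam + b) + Q.2 ^ 2 * (lam + a) := by
    field_simp at hE; linarith
  have h2 : α ^ 2 * (lam + a) = mu + a := by
    rw [hα2]; field_simp
  have h3 : β ^ 2 * (lam + b) = mu + b := by
    rw [hβ2]; field_simp
  nlinarith [sq_nonneg (P.1 - Q.1), sq_nonneg (P.2 - Q.2), hla.le, hlb.le,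
    mul_pos hla hlb, sq_nonneg α, sq_nonneg β]
end

section
/- Ivory's theorem in space: for a > b > c, parameters λ, μ > −c (two confocal ellipsoids), the affine map A(x,y,z) = (√((μ+a)/(λ+a))x, √((μ+b)/(λ+b))y, √((μ+c)/(λ+c))z), and any two points P, Q on the ellipsoid with parameter λ, one has |P − A(Q)| = |Q − A(P)|. -/
/-- Ivory's theorem in space, for confocal ellipsoids. -/
theorem ivory_theorem_space
    (a b c lam mu : ℝ) (hab : b < a) (hbc : c < b)
    (hlam : -c < lam) (hmu : -c < mu)
    (A : ℝ × ℝ × ℝ → ℝ × ℝ × ℝ)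
    (hA : ∀ p : ℝ × ℝ × ℝ, A p =
      (Real.sqrt ((mu + a) / (lam + a)) * p.1,
       Real.sqrt ((mu + b) / (lam + b)) * p.2.1,
       Real.sqrt ((mu + c) / (lam + c)) * p.2.2))
    (P Q : ℝ × ℝ × ℝ)
    (hP : P.1 ^ 2 / (lam + a) + P.2.1 ^ 2 / (lam + b) + P.2.2 ^ 2 / (lam + c) = 1)
    (hQ : Q.1 ^ 2 / (lam + a) + Q.2.1 ^ 2 / (lam + b) + Q.2.2 ^ 2 / (lam + c) = 1) :
    Real.sqrt ((P.1 - (A Q).1) ^ 2 + (P.2.1 - (A Q).2.1) ^ 2 + (P.2.2 - (A Q).2.2) ^ 2) =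
      Real.sqrt ((Q.1 - (A P).1) ^ 2 + (Q.2.1 - (A P).2.1) ^ 2 + (Q.2.2 - (A P).2.2) ^ 2) := by
  have hla : (0:ℝ) < lam + a := by linarith
  have hlb : (0:ℝ) < lam + b := by linarith
  have hlc : (0:ℝ) < lam + c := by linarith
  have hma : (0:ℝ) < mu + a := by linarith
  have hmb : (0:ℝ) < mu + b := by linarith
  have hmc : (0:ℝ) < mu + c := by linarith
  have sa : Real.sqrt ((mu + a) / (lam + a)) ^ 2 = (mu + a) / (lam + a) :=
    Real.sq_sqrt (by positivity)
  have sb : Real.sqrt ((mu + b) / (lam + b)) ^ 2 = (mu + b) / (lam + b) :=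
    Real.sq_sqrt (by positivity)
  have sc : Real.sqrt ((mu + c) / (lam + c)) ^ 2 = (mu + c) / (lam + c) :=
    Real.sq_sqrt (by positivity)
  rw [hA P, hA Q]
  congr 1
  set α := Real.sqrt ((mu + a) / (lam + a))
  set β := Real.sqrt ((mu + b) / (lam + b))
  set γ := Real.sqrt ((mu + c) / (lam + c))
  have keyP : (α^2 - 1) * P.1^2 + (β^2 - 1) * P.2.1^2 + (γ^2 - 1) * P.2.2^2 = mu - lam := by
    rw [sa, sb, sc]
    have h1 : (mu + a) / (lam + a) - 1 = (mu - lam) / (lam + a) := by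
      field_simp
      ring
    have h2 : (mu + b) / (lam + b) - 1 = (mu - lam) / (lam + b) := by
      field_simp
      ring
    have h3 : (mu + c) / (lam + c) - 1 = (mu - lam) / (lam + c) := by
      field_simp
      ring
    rw [h1, h2, h3]
    calc (mu - lam) / (lam + a) * P.1^2 + (mu - lam) / (lam + b) * P.2.1^2
        + (mu - lam) / (lam + c) * P.2.2^2
        = (mu - lam) * (P.1 ^ 2 / (lam + a) + P.2.1 ^ 2 / (lam + b) + P.2.2 ^ 2 / (lam + c)) := by
          ring
      _ = mu - lam := by rw [hP]; ring
  have keyQ : (α^2 - 1) * Q.1^2 + (β^2 - 1) * Q.2.1^2 + (γ^2 - 1) * Q.2.2^2 = mu - lam := by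
    rw [sa, sb, sc]
    have h1 : (mu + a) / (lam + a) - 1 = (mu - lam) / (lam + a) := by
      field_simp
      ring
    have h2 : (mu + b) / (lam + b) - 1 = (mu - lam) / (lam + b) := by
      field_simp
      ring
    have h3 : (mu + c) / (lam + c) - 1 = (mu - lam) / (lam + c) := by
      field_simp
      ring
    rw [h1, h2, h3]
    calc (mu - lam) / (lam + a) * Q.1^2 + (mu - lam) / (lam + b) * Q.2.1^2
        + (mu - lam) / (lam + c) * Q.2.2^2
        = (mu - lam) * (Q.1 ^ 2 / (lam + a) + Q.2.1 ^ 2 / (lam + b) + Q.2.2 ^ 2 / (lam + c)) := by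
          ring
      _ = mu - lam := by rw [hQ]; ring
  linear_combination keyQ - keyP
end

section
/- Consider the family of surfaces parametrised by (s1,s2) ↦ (x,y,z) with x = f1(s1)f2(s2)·(√(a-c)/√(b-c))cos s3 / √((a-b)(a-c)), y = g1(s1)g2(s2)/√((a-b)(b-c)), z = h1(s1)h2(s2)·(√(a-c)/√(a-b))sin s3 / √((a-c)(b-c)), where f1 = √(a-c)cos s1, h1 = √(a-c)sin s1, g1 = √(a-b-(a-c)cos²s1) (and similarly f2 = √(a-c)cos s2, h2 = √(a-c)sin s2, g2 = √((a-c)cos²s2-(a-b))), with s3 a deformation parameter. Then the squared speed along the diagonal directions, r_α² = r_β² with α = s1+s2, β = s1−s2, equals (a-c)²(cos²s1 − cos²s2)² / (4(a-b-(a-c)cos²s1)((a-c)cos²s2 − a+b)) and is independent of s3. -/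
set_option maxHeartbeats 4000000


open Real

private lemma key_ident (A B C c1 c2 t1 t2 u v p q sb sc e : ℝ)
    (hA : A = B + C) (hsb : sb ^ 2 = B) (hsc : sc ^ 2 = C)
    (hp : p ^ 2 = B - A * c1 ^ 2) (hq : q ^ 2 = A * c2 ^ 2 - B)
    (h1 : t1 ^ 2 = 1 - c1 ^ 2) (h2 : t2 ^ 2 = 1 - c2 ^ 2) (h3 : v ^ 2 = 1 - u ^ 2)
    (he : e ^ 2 = 1) :
    (A*u*(t1*c2 + e*(c1*t2)))^2 * (p^2*q^2) + (A*(c1*t1*q^2 - e*(c2*t2*p^2)))^2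
      + (A*v*(c1*t2 + e*(c2*t1)))^2 * (p^2*q^2)
    = sb^2*sc^2 * (A^2*(c1^2 - c2^2)^2) := by
  linear_combination (A^2*c2^2*t2^2*p^2*e^2 + A^2*c2^2*t1^2*v^2*q^2*e^2 + A^2*c2^2*t1^2*u^2*q^2 + (-2)*A^2*c1*c2*t1*t2*q^2*e + 2*A^2*c1*c2*t1*t2*v^2*q^2*e + 2*A^2*c1*c2*t1*t2*u^2*q^2*e + A^2*c1^2*t2^2*v^2*q^2 + A^2*c1^2*t2^2*u^2*q^2*e^2 + A^2*B*c2^2*t2^2*e^2 + (-1)*A^3*c1^2*c2^2*t2^2*e^2) * hp + (A^2*c1^2*t1^2*q^2 + A^2*B*c2^2*t1^2*v^2*e^2 + A^2*B*c2^2*t1^2*u^2 + (-2)*A^2*B*c1*c2*t1*t2*e + 2*A^2*B*c1*c2*t1*t2*v^2*e + 2*A^2*B*c1*c2*t1*t2*u^2*e + A^2*B*c1^2*t2^2*v^2 + A^2*B*c1^2*t2^2*u^2*e^2 + (-1)*A^2*B*c1^2*t1^2 + A^3*c1^2*c2^2*t1^2 + (-1)*A^3*c1^2*c2^2*t1^2*v^2*e^2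 + (-1)*A^3*c1^2*c2^2*t1^2*u^2 + 2*A^3*c1^3*c2*t1*t2*e + (-2)*A^3*c1^3*c2*t1*t2*v^2*e + (-2)*A^3*c1^3*c2*t1*t2*u^2*e + (-1)*A^3*c1^4*t2^2*v^2 + (-1)*A^3*c1^4*t2^2*u^2*e^2) * hq + ((-1)*A^2*c2^4*sc^2 + 2*A^2*c1^2*c2^2*sc^2 + (-1)*A^2*c1^4*sc^2) * hsb + ((-1)*A^2*B*c2^4 + 2*A^2*B*c1^2*c2^2 + (-1)*A^2*B*c1^4) * hsc + ((-1)*A^2*B^2*c2^2*v^2*e^2 + (-1)*A^2*B^2*c2^2*u^2 + A^2*B^2*c1^2 + A^3*B*c2^4*v^2*e^2 + A^3*B*c2^4*u^2 + (-2)*A^3*B*c1^2*c2^2 + A^3*B*c1^2*c2^2*v^2*e^2 + A^3*B*c1^2*c2^2*u^2 + A^4*c1^2*c2^4 + (-1)*A^4*c1^2*c2^4*v^2*e^2 + (-1)*A^4*c1^2*c2^4*u^2) * h1 + (A^2*B^2*c2^2*e^2 + (-1)*A^2*B^2*c1^2*v^2 + (-1)*A^2*B^2*c1^2*u^2*e^2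 + (-2)*A^3*B*c1^2*c2^2*e^2 + A^3*B*c1^2*c2^2*v^2 + A^3*B*c1^2*c2^2*u^2*e^2 + A^3*B*c1^4*v^2 + A^3*B*c1^4*u^2*e^2 + A^4*c1^4*c2^2*e^2 + (-1)*A^4*c1^4*c2^2*v^2 + (-1)*A^4*c1^4*c2^2*u^2*e^2) * h2 + ((-1)*A^2*B^2*c2^2*e^2 + (-2)*A^2*B^2*c1*c2*t1*t2*e + (-1)*A^2*B^2*c1^2 + A^2*B^2*c1^2*c2^2 + A^2*B^2*c1^2*c2^2*e^2 + A^3*B*c2^4*e^2 + 2*A^3*B*c1*c2^3*t1*t2*e + A^3*B*c1^2*c2^2 + A^3*B*c1^2*c2^2*e^2 + (-1)*A^3*B*c1^2*c2^4 + (-1)*A^3*B*c1^2*c2^4*e^2 + 2*A^3*B*c1^3*c2*t1*t2*e + A^3*B*c1^4 + (-1)*A^3*B*c1^4*c2^2 + (-1)*A^3*B*c1^4*c2^2*e^2 + (-1)*A^4*c1^2*c2^4*e^2 + (-2)*A^4*c1^3*c2^3*t1*t2*e + (-1)*A^4*c1^4*c2^2 + A^4*c1^4*c2^4 + A^4*c1^4*c2^4*e^2)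 * h3 + (A^2*B^2*c2^2*u^2 + (-1)*A^2*B^2*c2^4 + (-1)*A^2*B^2*c1^2*u^2 + A^2*B^2*c1^2*c2^2 + A^3*B*c2^4 + (-1)*A^3*B*c2^4*u^2 + (-1)*A^3*B*c1^2*c2^2 + A^3*B*c1^2*c2^4 + A^3*B*c1^4*u^2 + (-1)*A^3*B*c1^4*c2^2 + (-1)*A^4*c1^2*c2^4 + A^4*c1^2*c2^4*u^2 + A^4*c1^4*c2^2 + (-1)*A^4*c1^4*c2^2*u^2) * he + (A^2*B*c2^4 + (-2)*A^2*B*c1^2*c2^2 + A^2*B*c1^4) * hA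

/-- For the uniformly scaled family of confocal ellipsoids, the squared speeds
along the diagonal (circular) directions coincide and are independent of the
deformation parameter s₃. -/
theorem circular_directions_isometric
    (a b c s3 : ℝ) (hab : b < a) (hbc : c < b)
    (X Y Z : ℝ → ℝ → ℝ)
    (hX : ∀ s1 s2, X s1 s2 =
      (Real.sqrt (a - c) * Real.cos s1) * (Real.sqrt (a - c) * Real.cos s2) *
        (Real.sqrt (a - c) / Real.sqrt (b - c)) * Real.cos s3 /
        Real.sqrt ((a - b) * (a - c)))
    (hY : ∀ s1 s2, Y s1 s2 =
      Real.sqrt (a - b - (a - c) * (Real.cos s1) ^ 2) *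
        Real.sqrt ((a - c) * (Real.cos s2) ^ 2 - (a - b)) /
        Real.sqrt ((a - b) * (b - c)))
    (hZ : ∀ s1 s2, Z s1 s2 =
      (Real.sqrt (a - c) * Real.sin s1) * (Real.sqrt (a - c) * Real.sin s2) *
        (Real.sqrt (a - c) / Real.sqrt (a - b)) * Real.sin s3 /
        Real.sqrt ((a - c) * (b - c)))
    (s0 s1 s2 : ℝ) (hs0 : s0 = Real.arccos (Real.sqrt ((a - b) / (a - c))))
    (hs1 : s0 < s1) (hs1' : s1 < π - s0) (hs2 : |s2| < s0) :
    (let rαx := (deriv (fun t => X t s2) s1 + deriv (fun t => X s1 t) s2) / 2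
     let rαy := (deriv (fun t => Y t s2) s1 + deriv (fun t => Y s1 t) s2) / 2
     let rαz := (deriv (fun t => Z t s2) s1 + deriv (fun t => Z s1 t) s2) / 2
     rαx ^ 2 + rαy ^ 2 + rαz ^ 2 =
       (a - c) ^ 2 * ((Real.cos s1) ^ 2 - (Real.cos s2) ^ 2) ^ 2 /
         (4 * (a - b - (a - c) * (Real.cos s1) ^ 2) *
           ((a - c) * (Real.cos s2) ^ 2 - (a - b)))) ∧
    (let rβx := (deriv (fun t => X t s2) s1 - deriv (fun t => X s1 t) s2) / 2
     let rβy := (deriv (fun t => Y t s2) s1 - deriv (fun t => Y s1 t) s2) / 2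
     let rβz := (deriv (fun t => Z t s2) s1 - deriv (fun t => Z s1 t) s2) / 2
     rβx ^ 2 + rβy ^ 2 + rβz ^ 2 =
       (a - c) ^ 2 * ((Real.cos s1) ^ 2 - (Real.cos s2) ^ 2) ^ 2 /
         (4 * (a - b - (a - c) * (Real.cos s1) ^ 2) *
           ((a - c) * (Real.cos s2) ^ 2 - (a - b)))) := by
  have hA : (0:ℝ) < a - c := by linarith
  have hB : (0:ℝ) < a - b := by linarith
  have hC : (0:ℝ) < b - c := by linarith
  -- cos s0
  have hrle : Real.sqrt ((a-b)/(a-c)) ≤ 1 := by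
    rw [show (1:ℝ) = Real.sqrt 1 by simp]
    apply Real.sqrt_le_sqrt
    rw [div_le_one hA]; linarith
  have hcos0 : Real.cos s0 = Real.sqrt ((a-b)/(a-c)) := by
    rw [hs0, Real.cos_arccos (by linarith [Real.sqrt_nonneg ((a-b)/(a-c))]) hrle]
  have hs0nonneg : 0 ≤ s0 := hs0 ▸ Real.arccos_nonneg _
  have hs0le : s0 ≤ π := hs0 ▸ Real.arccos_le_pi _
  have hc0 : 0 ≤ Real.cos s0 := hcos0 ▸ Real.sqrt_nonneg _
  have hc0sq : Real.cos s0 ^ 2 = (a-b)/(a-c) := by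
    rw [hcos0, Real.sq_sqrt (by positivity)]
  have hlt1 : Real.cos s1 < Real.cos s0 :=
    Real.strictAntiOn_cos ⟨hs0nonneg, hs0le⟩ ⟨by linarith, by linarith⟩ hs1
  have hlt1' : -Real.cos s0 < Real.cos s1 := by
    have := Real.strictAntiOn_cos (a := s1) (b := π - s0) ⟨by linarith, by linarith⟩
      ⟨by linarith, by linarith⟩ hs1'
    rwa [Real.cos_pi_sub] at this
  have hsq1 : Real.cos s1 ^ 2 < (a-b)/(a-c) := hc0sq ▸ sq_lt_sq' hlt1' hlt1
  have hlt2 : Real.cos s0 < Real.cos s2 := by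
    have := Real.strictAntiOn_cos (a := |s2|) (b := s0) ⟨abs_nonneg _, by linarith [le_of_lt hs2]⟩
      ⟨hs0nonneg, hs0le⟩ hs2
    rwa [Real.cos_abs] at this
  have hsq2 : (a-b)/(a-c) < Real.cos s2 ^ 2 := by
    rw [← hc0sq]; nlinarith
  have h1pos : 0 < a - b - (a-c) * Real.cos s1 ^ 2 := by
    rw [div_lt_iff₀ hA] at hsq2
    rw [lt_div_iff₀ hA] at hsq1
    nlinarith
  have h2pos : 0 < (a-c) * Real.cos s2 ^ 2 - (a-b) := by
    rw [div_lt_iff₀ hA] at hsq2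
    nlinarith
  set sa := Real.sqrt (a-c) with hsa
  set p := Real.sqrt (a - b - (a-c) * Real.cos s1 ^ 2) with hpdef
  set q := Real.sqrt ((a-c) * Real.cos s2 ^ 2 - (a-b)) with hqdef
  have hp0 : 0 < p := Real.sqrt_pos.mpr h1pos
  have hq0 : 0 < q := Real.sqrt_pos.mpr h2pos
  have hp2 : p ^ 2 = a - b - (a-c) * Real.cos s1 ^ 2 := Real.sq_sqrt h1pos.le
  have hq2 : q ^ 2 = (a-c) * Real.cos s2 ^ 2 - (a-b) := Real.sq_sqrt h2pos.le
  have dX1 : deriv (fun t => X t s2) s1 =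
      -Real.sin s1 * (sa * (sa * Real.cos s2) * (sa / Real.sqrt (b-c)) * Real.cos s3 / Real.sqrt ((a-b)*(a-c))) := by
    have hf : (fun t => X t s2) = fun t => Real.cos t *
        (sa * (sa * Real.cos s2) * (sa / Real.sqrt (b-c)) * Real.cos s3 / Real.sqrt ((a-b)*(a-c))) := by
      funext t; rw [hX]; ring
    rw [hf]; exact ((Real.hasDerivAt_cos s1).mul_const _).deriv
  have dX2 : deriv (fun t => X s1 t) s2 =
      -Real.sin s2 * (sa * Real.cos s1 * sa * (sa / Real.sqrt (b-c)) * Real.cos s3 / Real.sqrt ((a-b)*(a-c))) := by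
    have hf : (fun t => X s1 t) = fun t => Real.cos t *
        (sa * Real.cos s1 * sa * (sa / Real.sqrt (b-c)) * Real.cos s3 / Real.sqrt ((a-b)*(a-c))) := by
      funext t; rw [hX]; ring
    rw [hf]; exact ((Real.hasDerivAt_cos s2).mul_const _).deriv
  have dZ1 : deriv (fun t => Z t s2) s1 =
      Real.cos s1 * (sa * (sa * Real.sin s2) * (sa / Real.sqrt (a-b)) * Real.sin s3 / Real.sqrt ((a-c)*(b-c))) := by
    have hf : (fun t => Z t s2) = fun t => Real.sin t *
        (sa * (sa * Real.sin s2) * (sa / Real.sqrt (a-b)) * Real.sin s3 / Real.sqrt ((a-c)*(b-c))) := by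
      funext t; rw [hZ]; ring
    rw [hf]; exact ((Real.hasDerivAt_sin s1).mul_const _).deriv
  have dZ2 : deriv (fun t => Z s1 t) s2 =
      Real.cos s2 * (sa * Real.sin s1 * sa * (sa / Real.sqrt (a-b)) * Real.sin s3 / Real.sqrt ((a-c)*(b-c))) := by
    have hf : (fun t => Z s1 t) = fun t => Real.sin t *
        (sa * Real.sin s1 * sa * (sa / Real.sqrt (a-b)) * Real.sin s3 / Real.sqrt ((a-c)*(b-c))) := by
      funext t; rw [hZ]; ring
    rw [hf]; exact ((Real.hasDerivAt_sin s2).mul_const _).deriv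
  have dY1 : deriv (fun t => Y t s2) s1 =
      -((a-c) * (2 * Real.cos s1 ^ 1 * -Real.sin s1)) / (2 * p) * (q / Real.sqrt ((a-b)*(b-c))) := by
    have hf : (fun t => Y t s2) = fun t =>
        Real.sqrt (a - b - (a-c) * Real.cos t ^ 2) * (q / Real.sqrt ((a-b)*(b-c))) := by
      funext t; rw [hY]; ring
    rw [hf]
    exact ((((((Real.hasDerivAt_cos s1).pow 2).const_mul (a-c)).const_sub (a-b)).sqrt
      (ne_of_gt h1pos)).mul_const _).deriv
  have dY2 : deriv (fun t => Y s1 t) s2 =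
      (a-c) * (2 * Real.cos s2 ^ 1 * -Real.sin s2) / (2 * q) * (p / Real.sqrt ((a-b)*(b-c))) := by
    have hf : (fun t => Y s1 t) = fun t =>
        Real.sqrt ((a-c) * Real.cos t ^ 2 - (a-b)) * (p / Real.sqrt ((a-b)*(b-c))) := by
      funext t; rw [hY]; ring
    rw [hf]
    exact ((((((Real.hasDerivAt_cos s2).pow 2).const_mul (a-c)).sub_const (a-b)).sqrt
      (ne_of_gt h2pos)).mul_const _).deriv
  have hsab : Real.sqrt ((a-b)*(a-c)) = Real.sqrt (a-b) * sa := Real.sqrt_mul hB.le _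
  have hsbc : Real.sqrt ((a-b)*(b-c)) = Real.sqrt (a-b) * Real.sqrt (b-c) := Real.sqrt_mul hB.le _
  have hsac : Real.sqrt ((a-c)*(b-c)) = sa * Real.sqrt (b-c) := Real.sqrt_mul hA.le _
  set sb := Real.sqrt (a-b) with hsbdef
  set sc := Real.sqrt (b-c) with hscdef
  have hsa2 : sa ^ 2 = a - c := Real.sq_sqrt hA.le
  have hsb2 : sb ^ 2 = a - b := Real.sq_sqrt hB.le
  have hsc2 : sc ^ 2 = b - c := Real.sq_sqrt hC.le
  have hsa0 : sa ≠ 0 := by positivity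
  have hsb0 : sb ≠ 0 := by positivity
  have hsc0 : sc ≠ 0 := by positivity
  have ht1 : Real.sin s1 ^ 2 = 1 - Real.cos s1 ^ 2 := by
    have := Real.sin_sq_add_cos_sq s1; linarith
  have ht2 : Real.sin s2 ^ 2 = 1 - Real.cos s2 ^ 2 := by
    have := Real.sin_sq_add_cos_sq s2; linarith
  have ht3 : Real.sin s3 ^ 2 = 1 - Real.cos s3 ^ 2 := by
    have := Real.sin_sq_add_cos_sq s3; linarith
  have dX1' : deriv (fun t => X t s2) s1 =
      -(Real.sin s1 * Real.cos s2 * Real.cos s3 * (a-c)) / (sb*sc) := by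
    rw [dX1, hsab, ← hsa2]; field_simp
  have dX2' : deriv (fun t => X s1 t) s2 =
      -(Real.sin s2 * Real.cos s1 * Real.cos s3 * (a-c)) / (sb*sc) := by
    rw [dX2, hsab, ← hsa2]; field_simp
  have dZ1' : deriv (fun t => Z t s2) s1 =
      Real.cos s1 * Real.sin s2 * Real.sin s3 * (a-c) / (sb*sc) := by
    rw [dZ1, hsac, ← hsa2]; field_simp
  have dZ2' : deriv (fun t => Z s1 t) s2 =
      Real.cos s2 * Real.sin s1 * Real.sin s3 * (a-c) / (sb*sc) := by
    rw [dZ2, hsac, ← hsa2]; field_simp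
  have dY1' : deriv (fun t => Y t s2) s1 =
      (a-c) * Real.cos s1 * Real.sin s1 * q / (p * (sb*sc)) := by
    rw [dY1, hsbc]; field_simp
  have dY2' : deriv (fun t => Y s1 t) s2 =
      -((a-c) * Real.cos s2 * Real.sin s2 * p) / (q * (sb*sc)) := by
    rw [dY2, hsbc]; field_simp
  constructor
  · dsimp only
    rw [dX1', dX2', dY1', dY2', dZ1', dZ2', ← hp2, ← hq2]
    have hkey := key_ident (a-c) (a-b) (b-c) (Real.cos s1) (Real.cos s2) (Real.sin s1)
      (Real.sin s2) (Real.cos s3) (Real.sin s3) p q sb sc 1 (by ring) hsb2 hsc2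
      (by linear_combination hp2) (by linear_combination hq2) ht1 ht2 ht3 (by norm_num)
    calc _ = (((a-c)*Real.cos s3*(Real.sin s1*Real.cos s2 + 1*(Real.cos s1*Real.sin s2)))^2*(p^2*q^2) + ((a-c)*(Real.cos s1*Real.sin s1*q^2 - 1*(Real.cos s2*Real.sin s2*p^2)))^2 + ((a-c)*Real.sin s3*(Real.cos s1*Real.sin s2 + 1*(Real.cos s2*Real.sin s1)))^2*(p^2*q^2)) / (4*p^2*q^2*(sb^2*sc^2)) := by
            field_simp
            ring
      _ = sb^2*sc^2*((a-c)^2*(Real.cos s1^2 - Real.cos s2^2)^2) / (4*p^2*q^2*(sb^2*sc^2)) := by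
            rw [hkey]
      _ = _ := by
            field_simp
  · dsimp only
    rw [dX1', dX2', dY1', dY2', dZ1', dZ2', ← hp2, ← hq2]
    have hkey := key_ident (a-c) (a-b) (b-c) (Real.cos s1) (Real.cos s2) (Real.sin s1)
      (Real.sin s2) (Real.cos s3) (Real.sin s3) p q sb sc (-1) (by ring) hsb2 hsc2
      (by linear_combination hp2) (by linear_combination hq2) ht1 ht2 ht3 (by norm_num)
    calc _ = (((a-c)*Real.cos s3*(Real.sin s1*Real.cos s2 + (-1)*(Real.cos s1*Real.sin s2)))^2*(p^2*q^2) + ((a-c)*(Real.cos s1*Real.sin s1*q^2 - (-1)*(Real.cos s2*Real.sin s2*p^2)))^2 + ((a-c)*Real.sin s3*(Real.cos s1*Real.sin s2 + (-1)*(Real.cos s2*Real.sin s1)))^2*(p^2*q^2)) / (4*p^2*q^2*(sb^2*sc^2)) := by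
            field_simp
            ring
      _ = sb^2*sc^2*((a-c)^2*(Real.cos s1^2 - Real.cos s2^2)^2) / (4*p^2*q^2*(sb^2*sc^2)) := by
            rw [hkey]
      _ = _ := by
            field_simp
end

section
/- With the parametrisation of the previous context, the planar curves β = s1 − s2 = const on each ellipsoid of the family are circles of radius |sin β|; equivalently, the curvature |r_α × r_αα| / |r_α|³ of the α-parameter curves (β fixed) equals 1/|sin β|. -/
open Real

lemma key_id (C1 S1 C2 S2 m : ℝ) (h1 : S1^2 = 1 - C1^2) (h2 : S2^2 = 1 - C2^2) :
    (S1*C2 - C1*S2)^2 * (4*m*(1-m)) - ((C1*C2 - S1*S2) - (C1*C2 + S1*S2)*(2*m-1))^2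
    = 4*(m - C1^2)*(C2^2 - m) := by
  linear_combination (4*(m*(1-m)*C2^2 - m^2*S2^2)) * h1 + (4*(m*(1-m)*C1^2 - m^2*(1-C1^2))) * h2


lemma final_alg (A B K s cc e w S2 f1 f2 : ℝ) (hK : 0 < K) (hs : 0 < s)
    (hw : 0 < w) (hS2 : 0 < S2) (hAB : A^2 + B^2 = K^2/4)
    (hf1 : f1 = K/2 * (s * e / w)) (hwq : w^2 = S2 - e^2)
    (hM : cc * f1 - s * f2 = K/2 * (s^3 * S2 / w^3)) :
    Real.sqrt (dot3 (cross3 (-A*s, f1, B*s) (-A*cc, f2, B*cc))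
        (cross3 (-A*s, f1, B*s) (-A*cc, f2, B*cc))) /
      (Real.sqrt (dot3 (-A*s, f1, B*s) (-A*s, f1, B*s)))^3 = 2 / (K * Real.sqrt S2) := by
  have hsS2 : (Real.sqrt S2)^2 = S2 := Real.sq_sqrt hS2.le
  have hsS2pos : 0 < Real.sqrt S2 := Real.sqrt_pos.mpr hS2
  have hnum : dot3 (cross3 (-A*s, f1, B*s) (-A*cc, f2, B*cc))
      (cross3 (-A*s, f1, B*s) (-A*cc, f2, B*cc))
      = (K/2 * (K/2 * (s^3 * S2 / w^3)))^2 := by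
    unfold dot3 cross3
    simp only
    linear_combination ((A^2+B^2)*(cc*f1 - s*f2 + K/2*(s^3*S2/w^3))) * hM
      + ((K/2*(s^3*S2/w^3))^2) * hAB
  have hden : dot3 (-A*s, f1, B*s) (-A*s, f1, B*s)
      = (K/2 * (s * Real.sqrt S2 / w))^2 := by
    unfold dot3
    simp only
    rw [hf1]
    field_simp
    linear_combination (4*w^2) * hAB + K^2 * hwq - K^2 * hsS2
  rw [hnum, hden, Real.sqrt_sq (by positivity), Real.sqrt_sq (by positivity)]
  field_simp
  linear_combination (-1:ℝ) * hsS2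


lemma curvature_aux (A B K d S2 u α0 : ℝ) (hK : 0 < K) (hAB : A^2 + B^2 = K^2/4)
    (hs : 0 < Real.sin α0) (hQ : 0 < S2 - (Real.cos α0 - d)^2)
    (g : ℝ → ℝ × ℝ × ℝ)
    (hg : g = fun t => (A*(u + Real.cos t),
      K/2 * Real.sqrt (S2 - (Real.cos t - d)^2), B*(u - Real.cos t))) :
    Real.sqrt (dot3 (cross3 (deriv g α0) (deriv (deriv g) α0))
        (cross3 (deriv g α0) (deriv (deriv g) α0))) /
      (Real.sqrt (dot3 (deriv g α0) (deriv g α0))) ^ 3 = 2 / (K * Real.sqrt S2) := by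
  subst hg
  set Q : ℝ → ℝ := fun t => S2 - (Real.cos t - d)^2 with hQdef
  have hQcont : Continuous Q := by fun_prop
  have hU : ∀ᶠ t in nhds α0, 0 < Q t :=
    (hQcont.tendsto α0).eventually (eventually_gt_nhds hQ)
  have hQder : ∀ t : ℝ, HasDerivAt Q (2 * Real.sin t * (Real.cos t - d)) t := by
    intro t
    have h1 : HasDerivAt (fun t => Real.cos t - d) (-Real.sin t) t :=
      (Real.hasDerivAt_cos t).sub_const d
    have := ((h1.pow 2).const_sub S2)
    exact this.congr_deriv (by ring)
  set g1 : ℝ → ℝ × ℝ × ℝ := fun t => (-A * Real.sin t,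
      K/2 * (Real.sin t * (Real.cos t - d) / Real.sqrt (Q t)),
      B * Real.sin t) with hg1def
  have hder1 : ∀ t : ℝ, 0 < Q t →
      HasDerivAt (fun t => (A*(u + Real.cos t),
        K/2 * Real.sqrt (S2 - (Real.cos t - d)^2), B*(u - Real.cos t))) (g1 t) t := by
    intro t ht
    have hx : HasDerivAt (fun t => A*(u + Real.cos t)) (-A * Real.sin t) t := by
      have := ((Real.hasDerivAt_cos t).const_add u).const_mul A
      exact this.congr_deriv (by ring)
    have hz : HasDerivAt (fun t => B*(u - Real.cos t)) (B * Real.sin t) t := by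
      have := ((Real.hasDerivAt_cos t).const_sub u).const_mul B
      exact this.congr_deriv (by ring)
    have hy : HasDerivAt (fun t => K/2 * Real.sqrt (S2 - (Real.cos t - d)^2))
        (K/2 * (Real.sin t * (Real.cos t - d) / Real.sqrt (Q t))) t := by
      have hsq : HasDerivAt (fun t => Real.sqrt (Q t))
          (2 * Real.sin t * (Real.cos t - d) / (2 * Real.sqrt (Q t))) t :=
        (hQder t).sqrt ht.ne'
      have := hsq.const_mul (K/2)
      refine this.congr_deriv ?_
      rw [mul_assoc 2, mul_div_mul_left _ _ (two_ne_zero' ℝ)]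
    exact hx.prodMk (hy.prodMk hz)
  -- deriv g =ᶠ g1 near α0
  have hev : (deriv fun t => (A*(u + Real.cos t),
      K/2 * Real.sqrt (S2 - (Real.cos t - d)^2), B*(u - Real.cos t))) =ᶠ[nhds α0] g1 :=
    hU.mono fun t ht => (hder1 t ht).deriv
  have hd1 : deriv (fun t => (A*(u + Real.cos t),
      K/2 * Real.sqrt (S2 - (Real.cos t - d)^2), B*(u - Real.cos t))) α0 = g1 α0 :=
    (hder1 α0 hQ).deriv
  -- second derivative: differentiate g1 at α0
  set s := Real.sin α0
  set cc := Real.cos α0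
  set w := Real.sqrt (Q α0) with hwdef
  have hw : 0 < w := Real.sqrt_pos.mpr hQ
  have hw2 : w^2 = Q α0 := Real.sq_sqrt hQ.le
  set f2 : ℝ := K/2 * (((cc * (cc - d) + s * (-s)) * w -
      (s * (cc - d)) * (2 * s * (cc - d) / (2 * w))) / w^2) with hf2def
  have hder2 : HasDerivAt g1 (-A * cc, f2, B * cc) α0 := by
    have hx : HasDerivAt (fun t => -A * Real.sin t) (-A * cc) α0 :=
      (Real.hasDerivAt_sin α0).const_mul (-A)
    have hz : HasDerivAt (fun t => B * Real.sin t) (B * cc) α0 :=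
      (Real.hasDerivAt_sin α0).const_mul B
    have hN : HasDerivAt (fun t => Real.sin t * (Real.cos t - d))
        (cc * (cc - d) + s * (-s)) α0 :=
      (Real.hasDerivAt_sin α0).mul ((Real.hasDerivAt_cos α0).sub_const d)
    have hD : HasDerivAt (fun t => Real.sqrt (Q t))
        (2 * s * (cc - d) / (2 * w)) α0 := (hQder α0).sqrt hQ.ne'
    have hy : HasDerivAt (fun t => K/2 * (Real.sin t * (Real.cos t - d) / Real.sqrt (Q t)))
        f2 α0 := ((hN.div hD hw.ne').const_mul (K/2))
    exact hx.prodMk (hy.prodMk hz)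
  have hd2 : deriv g1 α0 = (-A * cc, f2, B * cc) := hder2.deriv
  have hD2 : deriv (deriv fun t => (A*(u + Real.cos t),
      K/2 * Real.sqrt (S2 - (Real.cos t - d)^2), B*(u - Real.cos t))) α0
      = (-A * cc, f2, B * cc) := by
    rw [Filter.EventuallyEq.deriv_eq hev, hd2]
  rw [hd1, hD2, hg1def]
  simp only
  set e := cc - d with hedef
  have hwq : w^2 = S2 - e^2 := hw2
  have hS2 : 0 < S2 := lt_of_le_of_lt (by positivity) (by nlinarith [hwq, sq_nonneg w] : e^2 < S2)
  set f1 : ℝ := K/2 * (s * e / w) with hf1def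
  have hM : cc * f1 - s * f2 = K/2 * (s^3 * S2 / w^3) := by
    rw [hf1def, hf2def]
    field_simp
    linear_combination s^2 * hwq
  have hS2' : (0:ℝ) < S2 := hS2
  exact final_alg A B K (Real.sin α0) (Real.cos α0) (Real.cos α0 - d)
    (Real.sqrt (Q α0)) S2 _ f2 hK hs hw hS2' hAB rfl hwq hM


set_option maxHeartbeats 1000000 in
/-- The planar diagonal curves β = s1 − s2 = const on the scaled confocal
ellipsoids are circles of radius |sin β|: the curvature of the α-parameter
curves equals 1/|sin β|. -/
theorem circular_sections_have_radius_sin_beta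
    (a b c s3 : ℝ) (hab : b < a) (hbc : c < b)
    (hs3 : 0 < s3) (hs3' : s3 < π / 2)
    (X Y Z : ℝ → ℝ → ℝ)
    (hX : ∀ s1 s2, X s1 s2 =
      (Real.sqrt (a - c) * Real.cos s1) * (Real.sqrt (a - c) * Real.cos s2) *
        (Real.sqrt (a - c) / Real.sqrt (b - c)) * Real.cos s3 /
        Real.sqrt ((a - b) * (a - c)))
    (hY : ∀ s1 s2, Y s1 s2 =
      Real.sqrt (a - b - (a - c) * (Real.cos s1) ^ 2) *
        Real.sqrt ((a - c) * (Real.cos s2) ^ 2 - (a - b)) /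
        Real.sqrt ((a - b) * (b - c)))
    (hZ : ∀ s1 s2, Z s1 s2 =
      (Real.sqrt (a - c) * Real.sin s1) * (Real.sqrt (a - c) * Real.sin s2) *
        (Real.sqrt (a - c) / Real.sqrt (a - b)) * Real.sin s3 /
        Real.sqrt ((a - c) * (b - c)))
    (γ : ℝ → ℝ × ℝ × ℝ) (β : ℝ)
    (hγ : ∀ t, γ t = (X ((t + β) / 2) ((t - β) / 2),
                      Y ((t + β) / 2) ((t - β) / 2),
                      Z ((t + β) / 2) ((t - β) / 2)))
    (hβ : Real.sin β ≠ 0)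
    (α0 : ℝ) (s0 : ℝ) (hs0 : s0 = Real.arccos (Real.sqrt ((a - b) / (a - c))))
    (h1 : s0 < (α0 + β) / 2) (h1' : (α0 + β) / 2 < π - s0)
    (h2 : |(α0 - β) / 2| < s0) :
    Real.sqrt (dot3 (cross3 (deriv γ α0) (deriv (deriv γ) α0))
        (cross3 (deriv γ α0) (deriv (deriv γ) α0))) /
      (Real.sqrt (dot3 (deriv γ α0) (deriv γ α0))) ^ 3 = 1 / |Real.sin β| := by
  have hp : (0:ℝ) < a - b := by linarith
  have hq : (0:ℝ) < b - c := by linarith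
  have hr : (0:ℝ) < a - c := by linarith
  set m : ℝ := (a - b) / (a - c) with hmdef
  have hm0 : 0 < m := div_pos hp hr
  have hm1 : m < 1 := (div_lt_one hr).mpr (by linarith)
  set sp : ℝ := Real.sqrt (a - b) with hspdef
  set sq' : ℝ := Real.sqrt (b - c) with hsqdef
  set sr : ℝ := Real.sqrt (a - c) with hsrdef
  have hsp2 : sp^2 = a - b := Real.sq_sqrt hp.le
  have hsq2 : sq'^2 = b - c := Real.sq_sqrt hq.le
  have hsr2 : sr^2 = a - c := Real.sq_sqrt hr.le
  have hsp0 : 0 < sp := Real.sqrt_pos.mpr hp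
  have hsq0 : 0 < sq' := Real.sqrt_pos.mpr hq
  have hsr0 : 0 < sr := Real.sqrt_pos.mpr hr
  set K : ℝ := (a - c) / (sp * sq') with hKdef
  have hK : 0 < K := div_pos hr (by positivity)
  set A : ℝ := K * Real.cos s3 / 2 with hAdef
  set B : ℝ := K * Real.sin s3 / 2 with hBdef
  have hAB : A^2 + B^2 = K^2/4 := by
    have h := Real.sin_sq_add_cos_sq s3
    rw [hAdef, hBdef]
    linear_combination (K^2/4) * h
  set u : ℝ := Real.cos β with hudef
  set d : ℝ := u * (2*m - 1) with hddef
  set S2v : ℝ := (Real.sin β)^2 * (4*m*(1-m)) with hS2def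
  set g : ℝ → ℝ × ℝ × ℝ := fun t => (A*(u + Real.cos t),
      K/2 * Real.sqrt (S2v - (Real.cos t - d)^2), B*(u - Real.cos t)) with hgdef
  -- the key pointwise identity for the Y-radicand
  have hkeyt : ∀ t : ℝ, S2v - (Real.cos t - d)^2
      = 4*((m - Real.cos ((t+β)/2)^2)*(Real.cos ((t-β)/2)^2 - m)) := by
    intro t
    have ht : t = (t+β)/2 + (t-β)/2 := by ring
    have hb : β = (t+β)/2 - (t-β)/2 := by ring
    have hct : Real.cos t = Real.cos ((t+β)/2) * Real.cos ((t-β)/2)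
        - Real.sin ((t+β)/2) * Real.sin ((t-β)/2) := by
      nth_rewrite 1 [ht]; exact Real.cos_add _ _
    have hcb : Real.cos β = Real.cos ((t+β)/2) * Real.cos ((t-β)/2)
        + Real.sin ((t+β)/2) * Real.sin ((t-β)/2) := by
      nth_rewrite 1 [hb]; exact Real.cos_sub _ _
    have hsb : Real.sin β = Real.sin ((t+β)/2) * Real.cos ((t-β)/2)
        - Real.cos ((t+β)/2) * Real.sin ((t-β)/2) := by
      nth_rewrite 1 [hb]; exact Real.sin_sub _ _
    have := key_id (Real.cos ((t+β)/2)) (Real.sin ((t+β)/2)) (Real.cos ((t-β)/2))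
      (Real.sin ((t-β)/2)) m (Real.sin_sq _) (Real.sin_sq _)
    rw [hS2def, hddef, hudef, hct, hcb, hsb]
    linear_combination this
  -- γ agrees with g where the radicands are positive
  have hcomp : ∀ t : ℝ, Real.cos ((t+β)/2)^2 < m → m < Real.cos ((t-β)/2)^2 →
      γ t = g t := by
    intro t hA1 hA2
    have ht : t = (t+β)/2 + (t-β)/2 := by ring
    have hb : β = (t+β)/2 - (t-β)/2 := by ring
    set C1 := Real.cos ((t+β)/2) with hC1
    set S1 := Real.sin ((t+β)/2) with hS1
    set C2 := Real.cos ((t-β)/2) with hC2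
    set S2 := Real.sin ((t-β)/2) with hS2
    have hct : Real.cos t = C1*C2 - S1*S2 := by
      nth_rewrite 1 [ht]; exact Real.cos_add _ _
    have hcb : u = C1*C2 + S1*S2 := by
      rw [hudef]; nth_rewrite 1 [hb]; exact Real.cos_sub _ _
    rw [hγ, hX, hY, hZ, hgdef]
    simp only [Prod.mk.injEq]
    refine ⟨?_, ?_, ?_⟩
    · rw [Real.sqrt_mul hp.le, ← hspdef, ← hsrdef, ← hC1, ← hC2, hct, hcb]
      rw [hAdef, hKdef]
      field_simp
      linear_combination (2*C1*C2*Real.cos s3) * hsr2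
    · have e1 : a - b - (a-c)*C1^2 = (a-c)*(m - C1^2) := by
        rw [hmdef]; field_simp
      have e2 : (a-c)*C2^2 - (a-b) = (a-c)*(C2^2 - m) := by
        rw [hmdef]; field_simp
      have hx1 : (0:ℝ) ≤ m - C1^2 := by linarith
      have hx2 : (0:ℝ) ≤ C2^2 - m := by linarith
      rw [e1, e2, Real.sqrt_mul hr.le, Real.sqrt_mul hr.le, Real.sqrt_mul hp.le,
        ← hspdef, ← hsqdef, ← hsrdef, hkeyt t, ← hC1, ← hC2]
      have h4 : (4:ℝ)*((m - C1^2)*(C2^2 - m))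
          = (2*(Real.sqrt (m - C1^2) * Real.sqrt (C2^2 - m)))^2 := by
        rw [mul_pow, mul_pow, Real.sq_sqrt hx1, Real.sq_sqrt hx2]; ring
      rw [h4, Real.sqrt_sq (by positivity), hKdef]
      field_simp
      linear_combination (Real.sqrt (m - C1^2)*Real.sqrt (C2^2 - m)) * hsr2
    · rw [Real.sqrt_mul hr.le, ← hsqdef, ← hsrdef, ← hS1, ← hS2, hct, hcb]
      rw [hBdef, hKdef]
      field_simp
      linear_combination (2*S1*S2*Real.sin s3) * hsr2
  -- the constraints hold at α0 (in squared-cosine form)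
  have hcs0 : Real.cos s0 = Real.sqrt m := by
    rw [hs0, hmdef]
    exact Real.cos_arccos
      (le_trans (by norm_num) (Real.sqrt_nonneg _))
      (by
        rw [show (1:ℝ) = Real.sqrt 1 by simp]
        exact Real.sqrt_le_sqrt (by rw [div_le_one hr]; linarith))
  have hcs0sq : Real.cos s0 ^ 2 = m := by rw [hcs0]; exact Real.sq_sqrt hm0.le
  have hcs0pos : 0 < Real.cos s0 := by rw [hcs0]; positivity
  have hs0nn : 0 ≤ s0 := hs0 ▸ Real.arccos_nonneg _
  have hs0pi2 : s0 ≤ π/2 := hs0 ▸ Real.arccos_le_pi_div_two.mpr (by positivity)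
  have hpi : 0 < π := Real.pi_pos
  have hmem1 : Real.cos ((α0+β)/2)^2 < m := by
    have hs1mem : (α0+β)/2 ∈ Set.Icc 0 π := ⟨by linarith, by linarith⟩
    have hlt1 : Real.cos ((α0+β)/2) < Real.cos s0 :=
      Real.strictAntiOn_cos ⟨hs0nn, by linarith⟩ hs1mem h1
    have hlt2 : Real.cos (π - s0) < Real.cos ((α0+β)/2) :=
      Real.strictAntiOn_cos hs1mem ⟨by linarith, by linarith⟩ h1'
    rw [Real.cos_pi_sub] at hlt2
    calc Real.cos ((α0+β)/2)^2 < Real.cos s0 ^2 := sq_lt_sq' hlt2 hlt1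
    _ = m := hcs0sq
  have hmem2 : m < Real.cos ((α0-β)/2)^2 := by
    have habs : Real.cos s0 < Real.cos |(α0-β)/2| :=
      Real.strictAntiOn_cos ⟨abs_nonneg _, by linarith⟩ ⟨hs0nn, by linarith⟩ h2
    rw [Real.cos_abs] at habs
    calc m = Real.cos s0 ^2 := hcs0sq.symm
    _ < Real.cos ((α0-β)/2)^2 := sq_lt_sq' (by linarith) habs
  -- eventual equality and derivative transfer
  have hc1 : Continuous fun t : ℝ => Real.cos ((t+β)/2)^2 := by fun_prop
  have hc2 : Continuous fun t : ℝ => Real.cos ((t-β)/2)^2 := by fun_prop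
  have hopen : IsOpen {t : ℝ | Real.cos ((t+β)/2)^2 < m ∧ m < Real.cos ((t-β)/2)^2} :=
    IsOpen.inter (isOpen_lt hc1 continuous_const) (isOpen_lt continuous_const hc2)
  have hev : γ =ᶠ[nhds α0] g := by
    filter_upwards [hopen.mem_nhds ⟨hmem1, hmem2⟩] with t ht using hcomp t ht.1 ht.2
  have hsin : 0 < Real.sin α0 := by
    apply Real.sin_pos_of_pos_of_lt_pi
    · have := abs_lt.mp h2; linarith
    · have := abs_lt.mp h2; linarith
  have hQpos : 0 < S2v - (Real.cos α0 - d)^2 := by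
    rw [hkeyt α0]
    have := mul_pos (by linarith : (0:ℝ) < m - Real.cos ((α0+β)/2)^2)
      (by linarith : (0:ℝ) < Real.cos ((α0-β)/2)^2 - m)
    linarith
  rw [hev.deriv_eq, (hev.deriv).deriv_eq,
    curvature_aux A B K d S2v u α0 hK hAB hsin hQpos g hgdef]
  -- final constant computation
  have hS2sqrt : Real.sqrt S2v = |Real.sin β| * (2*sp*sq'/(a-c)) := by
    have h4 : S2v = (|Real.sin β| * (2*sp*sq'/(a-c)))^2 := by
      rw [hS2def, hmdef, mul_pow, sq_abs, div_pow, mul_pow, mul_pow, hsp2, hsq2]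
      field_simp
      ring
    rw [h4, Real.sqrt_sq (by positivity)]
  rw [hS2sqrt, hKdef]
  have habs : 0 < |Real.sin β| := abs_pos.mpr hβ
  field_simp
end

section
/- Let 0 < k < 1 and define the map (s1,s2,s3) ↦ (x,y,z) = (sn(s1,k)dc(s2,k)ns(s3,k), cn(s1,k)nc(s2,k)ds(s3,k), dn(s1,k)sc(s2,k)cs(s3,k)). Then for each constant λ1, the image of the surface s1 + s2 + s3 = λ1 lies in the plane x·cn(λ1,k) − y·sn(λ1,k) + z + dn(λ1,k) = 0. -/
set_option maxHeartbeats 4000000 in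
set_option maxRecDepth 100000 in


/-- The surface s1 + s2 + s3 = λ1 of the Minkowski confocal parametrisation
lies in the plane x·cn λ1 − y·sn λ1 + z + dn λ1 = 0. -/
theorem minkowski_web_surface_is_planar
    (k : ℝ) (hk : 0 < k) (hk1 : k < 1)
    (sn cn dn : ℝ → ℝ)
    (hpyth : ∀ s, sn s ^ 2 + cn s ^ 2 = 1)
    (hdn2 : ∀ s, dn s ^ 2 + k ^ 2 * sn s ^ 2 = 1)
    (hadd_sn : ∀ u v, sn (u + v) =
      (sn u * cn v * dn v + sn v * cn u * dn u) / (1 - k ^ 2 * sn u ^ 2 * sn v ^ 2))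
    (hadd_cn : ∀ u v, cn (u + v) =
      (cn u * cn v - sn u * sn v * dn u * dn v) / (1 - k ^ 2 * sn u ^ 2 * sn v ^ 2))
    (hadd_dn : ∀ u v, dn (u + v) =
      (dn u * dn v - k ^ 2 * sn u * sn v * cn u * cn v) / (1 - k ^ 2 * sn u ^ 2 * sn v ^ 2))
    (lam1 s1 s2 s3 : ℝ) (hsum : s1 + s2 + s3 = lam1)
    (hc2 : cn s2 ≠ 0) (hs3 : sn s3 ≠ 0) :
    let x := sn s1 * (dn s2 / cn s2) * (1 / sn s3)
    let y := cn s1 * (1 / cn s2) * (dn s3 / sn s3)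
    let z := dn s1 * (sn s2 / cn s2) * (cn s3 / sn s3)
    x * cn lam1 - y * sn lam1 + z + dn lam1 = 0 := by
  intro x y z
  subst hsum
  have hsq : ∀ u, sn u ^ 2 ≤ 1 := by
    intro u
    nlinarith [hpyth u, sq_nonneg (cn u)]
  have hden : ∀ u v, 1 - k ^ 2 * sn u ^ 2 * sn v ^ 2 ≠ 0 := by
    intro u v
    have h1 := hsq u; have h2 := hsq v
    have hs1 : (0:ℝ) ≤ sn u ^ 2 := sq_nonneg _
    have hs2 : (0:ℝ) ≤ sn v ^ 2 := sq_nonneg _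
    have hm : sn u ^ 2 * sn v ^ 2 ≤ 1 := by nlinarith
    have hmn : (0:ℝ) ≤ sn u ^ 2 * sn v ^ 2 := mul_nonneg hs1 hs2
    have hk2 : k ^ 2 < 1 := by nlinarith
    nlinarith [mul_le_of_le_one_right (le_of_lt (pow_pos hk 2)) hm]
  have hD2 := hden (s1 + s2) s3
  rw [hadd_sn s1 s2] at hD2
  simp only [x, y, z]
  rw [hadd_sn (s1 + s2) s3, hadd_cn (s1 + s2) s3, hadd_dn (s1 + s2) s3,
      hadd_sn s1 s2, hadd_cn s1 s2, hadd_dn s1 s2]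
  have hD12 := hden s1 s2
  set D := 1 - k ^ 2 * sn s1 ^ 2 * sn s2 ^ 2 with hD
  set Δ := 1 - k ^ 2 * ((sn s1 * cn s2 * dn s2 + sn s2 * cn s1 * dn s1) / D) ^ 2 * sn s3 ^ 2 with hΔ
  have hΔD : Δ * D ^ 2 = D ^ 2 - k ^ 2 * (sn s1 * cn s2 * dn s2 + sn s2 * cn s1 * dn s1) ^ 2 * sn s3 ^ 2 := by
    rw [hΔ]; field_simp
  field_simp
  rw [show sn s2 * dn s1 * D ^ 2 * cn s3 * Δ = sn s2 * dn s1 * cn s3 * (Δ * D ^ 2) by ring, hΔD, hD]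
  have haux : (dn s1 * cn s2 * dn s2 * sn s3 * dn s3) + (dn s1 * sn s2 * cn s3) + (-1 * cn s1 ^ 2 * dn s1 * cn s2 * dn s2 * sn s3 * dn s3) + (-1 * cn s1 ^ 2 * dn s1 * sn s2 * cn s3 * dn s3 ^ 2) + (sn s1 * cn s1 * cn s2 * dn s2 * cn s3) + (-1 * sn s1 * cn s1 * cn s2 * dn s2 * cn s3 * dn s3 ^ 2) + (-1 * sn s1 ^ 2 * dn s1 * cn s2 * dn s2 ^ 3 * sn s3 * dn s3) + (-1 * sn s1 ^ 2 * dn s1 * sn s2 * dn s2 ^ 2 * cn s3) + (-1 * k ^ 2 * cn s1 ^ 2 * dn s1 * sn s2 * cn s2 ^ 2 * sn s3 ^ 2 * cn s3) + (-1 * k ^ 2 * cn s1 ^ 2 * dn s1 ^ 3 * sn s2 ^ 3 * sn s3 ^ 2 * cn s3) + (-1 * k ^ 2 * sn s1 * cn s1 * cn s2 ^ 3 * dn s2 * sn s3 ^ 2 * cn s3) + (-1 * k ^ 2 * sn s1 * cn s1 * sn s2 * cn s2 ^ 2 * sn s3 * dn s3) + (-1 * k ^ 2 * sn s1 * cn s1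 * dn s1 ^ 2 * sn s2 ^ 2 * cn s2 * dn s2 * sn s3 ^ 2 * cn s3) + (k ^ 2 * sn s1 * cn s1 ^ 3 * sn s2 * cn s2 ^ 2 * sn s3 * dn s3) + (-1 * k ^ 2 * sn s1 ^ 2 * dn s1 * sn s2 ^ 2 * cn s2 * dn s2 * sn s3 * dn s3) + (-2 * k ^ 2 * sn s1 ^ 2 * dn s1 * sn s2 ^ 3 * cn s3) + (k ^ 2 * sn s1 ^ 2 * cn s1 ^ 2 * dn s1 * sn s2 ^ 3 * cn s3 * dn s3 ^ 2) + (k ^ 2 * sn s1 ^ 3 * cn s1 * sn s2 * cn s2 ^ 2 * dn s2 ^ 2 * sn s3 * dn s3) + (-1 * k ^ 2 * sn s1 ^ 3 * cn s1 * sn s2 ^ 2 * cn s2 * dn s2 * cn s3) + (k ^ 2 * sn s1 ^ 3 * cn s1 * sn s2 ^ 2 * cn s2 * dn s2 * cn s3 * dn s3 ^ 2) + (k ^ 2 * sn s1 ^ 4 * dn s1 * sn s2 ^ 3 * dn s2 ^ 2 * cn s3) + (k ^ 4 * sn s1 ^ 3 * cn s1 * sn s2 ^ 3 * cn s2 ^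 2 * sn s3 * dn s3) + (k ^ 4 * sn s1 ^ 4 * dn s1 * sn s2 ^ 5 * cn s3) = 0 := by
    linear_combination ((-1 * dn s1 * cn s2 * dn s2 * sn s3 * dn s3) + (-1 * dn s1 * sn s2 * cn s3 * dn s3 ^ 2) + (-1 * k ^ 2 * dn s1 * sn s2 * cn s2 ^ 2 * sn s3 ^ 2 * cn s3) + (-1 * k ^ 2 * dn s1 ^ 3 * sn s2 ^ 3 * sn s3 ^ 2 * cn s3) + (k ^ 2 * sn s1 * cn s1 * sn s2 * cn s2 ^ 2 * sn s3 * dn s3) + (k ^ 2 * sn s1 ^ 2 * dn s1 * sn s2 ^ 3 * cn s3 * dn s3 ^ 2)) * (hpyth s1) + ((-1 * k ^ 2 * dn s1 * sn s2 * sn s3 ^ 2 * cn s3) + (-1 * k ^ 2 * sn s1 * cn s1 * cn s2 * dn s2 * sn s3 ^ 2 * cn s3) + (k ^ 2 * sn s1 ^ 2 * dn s1 * sn s2 * sn s3 ^ 2 * cn s3) + (-1 * k ^ 2 * sn s1 ^ 3 * cn s1 * sn s2 * sn s3 * dn s3) + (k ^ 2 * sn s1 ^ 3 * cn s1 * sn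 s2 * dn s2 ^ 2 * sn s3 * dn s3) + (k ^ 4 * sn s1 ^ 3 * cn s1 * sn s2 ^ 3 * sn s3 * dn s3)) * (hpyth s2) + ((-1 * k ^ 2 * dn s1 * sn s2 ^ 3 * sn s3 ^ 2 * cn s3) + (-1 * k ^ 2 * sn s1 * cn s1 * sn s2 ^ 2 * cn s2 * dn s2 * sn s3 ^ 2 * cn s3) + (k ^ 2 * sn s1 ^ 2 * dn s1 * sn s2 ^ 3 * sn s3 ^ 2 * cn s3)) * (hdn2 s1) + ((-1 * sn s1 ^ 2 * dn s1 * cn s2 * dn s2 * sn s3 * dn s3) + (-1 * sn s1 ^ 2 * dn s1 * sn s2 * cn s3) + (k ^ 2 * sn s1 ^ 3 * cn s1 * sn s2 * sn s3 * dn s3) + (-1 * k ^ 2 * sn s1 ^ 3 * cn s1 * sn s2 ^ 3 * sn s3 * dn s3) + (k ^ 2 * sn s1 ^ 4 * dn s1 * sn s2 ^ 3 * cn s3)) * (hdn2 s2) + ((-1 * dn s1 * sn s2 * cn s3) + (-1 * sn s1 * cn s1 * cn s2 * dn s2 * cn s3) + (sn s1 ^ 2 * dn s1 * sn s2 * cn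 s3) + (k ^ 2 * sn s1 ^ 2 * dn s1 * sn s2 ^ 3 * cn s3) + (k ^ 2 * sn s1 ^ 3 * cn s1 * sn s2 ^ 2 * cn s2 * dn s2 * cn s3) + (-1 * k ^ 2 * sn s1 ^ 4 * dn s1 * sn s2 ^ 3 * cn s3)) * (hdn2 s3)
  linear_combination haux
end

section
/- Let 0 < k < 1, a − c = 1, a − b = k². For each λ, the plane x·cn(λ,k) − y·sn(λ,k) + z + dn(λ,k) = 0 is tangent to every quadric of the Minkowski confocal family x²/A + y²/B − z²/C = 1 with A − B = k², A − C = 1 (A, B, C > 0): the point (x0,y0,z0) = (−A·cd(λ,k), B·sd(λ,k), C·nd(λ,k)) lies on the quadric and the plane coincides with the tangent plane x0x/A + y0y/B − z0z/C = 1 there. -/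
/-- Each plane x·cn λ − y·sn λ + z + dn λ = 0 is tangent to every quadric of the
Minkowski confocal family x²/A + y²/B − z²/C = 1 with A − B = k², A − C = 1:
the point (−A·cd λ, B·sd λ, C·nd λ) lies on the quadric and the tangent plane
there coincides with the given plane. -/
theorem minkowski_planes_tangent_to_confocal_quadrics
    (k : ℝ) (hk : 0 < k) (hk1 : k < 1)
    (sn cn dn : ℝ → ℝ)
    (hpyth : ∀ s, sn s ^ 2 + cn s ^ 2 = 1)
    (hdn2 : ∀ s, dn s ^ 2 + k ^ 2 * sn s ^ 2 = 1)
    (A B C : ℝ) (hA : 0 < A) (hB : 0 < B) (hC : 0 < C)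
    (hAB : A - B = k ^ 2) (hAC : A - C = 1)
    (lam : ℝ) (hdn : dn lam ≠ 0) :
    let x0 := -A * (cn lam / dn lam)
    let y0 := B * (sn lam / dn lam)
    let z0 := C * (1 / dn lam)
    x0 ^ 2 / A + y0 ^ 2 / B - z0 ^ 2 / C = 1 ∧
    (∀ x y z : ℝ,
      x0 * x / A + y0 * y / B - z0 * z / C = 1 ↔
      x * cn lam - y * sn lam + z + dn lam = 0) := by
  intro x0 y0 z0
  have h1 := hpyth lam
  have h2 := hdn2 lam
  have key : A * cn lam ^ 2 + B * sn lam ^ 2 - C = dn lam ^ 2 := by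
    linear_combination A * h1 - sn lam ^ 2 * hAB + hAC - h2
  have hdn2' : dn lam ^ 2 ≠ 0 := pow_ne_zero 2 hdn
  constructor
  · have e : x0 ^ 2 / A + y0 ^ 2 / B - z0 ^ 2 / C
        = (A * cn lam ^ 2 + B * sn lam ^ 2 - C) / dn lam ^ 2 := by
      show (-A * (cn lam / dn lam)) ^ 2 / A + (B * (sn lam / dn lam)) ^ 2 / B -
        (C * (1 / dn lam)) ^ 2 / C = _
      field_simp
    rw [e, key, div_self hdn2']
  · intro x y z
    have e2 : x0 * x / A + y0 * y / B - z0 * z / C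
        = -(x * cn lam - y * sn lam + z) / dn lam := by
      show (-A * (cn lam / dn lam)) * x / A + (B * (sn lam / dn lam)) * y / B -
        (C * (1 / dn lam)) * z / C = _
      field_simp
      ring
    rw [e2, div_eq_one_iff_eq hdn]
    constructor <;> intro h <;> linarith
end
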